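/- arXiv:1909.00053 — 8 statements merged into one kernel-verified Lean document; each statement's English description precedes it below -/
import Mathlib

section
/- Let S be a finite set of prime numbers and let ℤ[S⁻¹] = {r ∈ ℚ : every prime dividing the denominator of r lies in S}, embedded diagonally in the topological ring R = ℝ × ∏_{p∈S} ℚ_p via x ↦ (x, (x)_{p∈S}). Then: (i) the only x ∈ ℤ[S⁻¹] with |x| < 1/2 and x ∈ ℤ_p for every p ∈ S is x = 0 (so the diagonal image of ℤ[S⁻¹] is a discrete subgroup of R); and (ii) for every (a, (a_p)_{p∈S}) ∈ R there exists x ∈ ℤ[S⁻¹] such that a − x ∈ [0,1] and a_p − x ∈ ℤ_p for every p ∈ S (so the compact set [0,1] × ∏_{p∈S} ℤ_p together with the diagonal image of ℤ[S⁻¹] covers R, i.e., ℤ[S⁻¹] is a cocompact lattice in R). -/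
instance (p : Nat.Primes) : Fact (p : ℕ).Prime := ⟨p.2⟩

private lemma key1 {p : ℕ} [hp : Fact p.Prime] {x : ℚ} (hx : x ≠ 0) (hd : p ∣ x.den) :
    1 < padicNorm p x := by
  have hnum : ¬ (p : ℤ) ∣ x.num := by
    intro h
    have h1 : p ∣ x.num.natAbs := by simpa using Int.natAbs_dvd_natAbs.mpr h
    have h2 : p ∣ 1 := x.reduced ▸ Nat.dvd_gcd h1 hd
    exact hp.out.one_lt.ne' (Nat.dvd_one.mp h2)
  have hv : padicValRat p x < 0 := by
    have h1 : 1 ≤ padicValNat p x.den := one_le_padicValNat_of_dvd x.den_nz hd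
    have h2 : padicValInt p x.num = 0 := padicValInt.eq_zero_of_not_dvd hnum
    rw [padicValRat_def, h2]
    omega
  rw [padicNorm.eq_zpow_of_nonzero hx]
  refine one_lt_zpow₀ ?_ (by omega)
  exact_mod_cast hp.out.one_lt

private lemma key2 (p : ℕ) [hp : Fact p.Prime] (b : ℚ_[p]) :
    ∃ r : ℚ, (∀ q : ℕ, q.Prime → q ∣ r.den → q = p) ∧ ‖b - (r : ℚ_[p])‖ ≤ 1 := by
  obtain ⟨q, hq⟩ := Padic.rat_dense (p := p) b (ε := 1) one_pos
  set k : ℕ := q.den.factorization p with hk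
  set m : ℕ := q.den / p ^ k with hm
  have hden : p ^ k * m = q.den := Nat.ordProj_mul_ordCompl_eq_self q.den p
  have hpm : ¬ p ∣ m := Nat.not_dvd_ordCompl hp.out q.den_nz
  have hm0 : m ≠ 0 := by
    intro h; rw [h, mul_zero] at hden; exact q.den_nz hden.symm
  have hpk0 : p ^ k ≠ 0 := pow_ne_zero _ hp.out.pos.ne'
  have hcop : m.Coprime (p ^ k) :=
    Nat.Coprime.pow_right _ ((Nat.Prime.coprime_iff_not_dvd hp.out).mpr hpm).symm
  haveI : NeZero (p ^ k) := ⟨hpk0⟩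
  have hunit : IsUnit ((m : ZMod (p ^ k))) := (ZMod.isUnit_iff_coprime m (p ^ k)).mpr hcop
  set c : ℤ := (((q.num : ZMod (p ^ k)) * (m : ZMod (p ^ k))⁻¹).val : ℤ) with hc
  have hdvd : ((p : ℤ) ^ k) ∣ q.num - c * m := by
    have : ((q.num - c * m : ℤ) : ZMod (p ^ k)) = 0 := by
      push_cast [hc]
      simp only [ZMod.natCast_val, ZMod.cast_id]
      rw [mul_assoc, ZMod.inv_mul_of_unit _ hunit, mul_one, sub_self]
    have h2 := (ZMod.intCast_zmod_eq_zero_iff_dvd _ _).mp this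
    exact_mod_cast h2
  obtain ⟨t, ht⟩ := hdvd
  clear_value c
  clear hc
  set r0 : ℚ := (c : ℚ) / ((p : ℚ) ^ k) with hr0
  refine ⟨r0, ?_, ?_⟩
  · intro l hl hld
    have h1 : r0 = Rat.divInt c ((p : ℤ) ^ k) := by
      rw [hr0, Rat.divInt_eq_div]; push_cast; ring
    have h2 : ((Rat.divInt c ((p : ℤ) ^ k)).den : ℤ) ∣ (p : ℤ) ^ k := Rat.den_dvd c _
    rw [h1] at hld
    have h3 : (l : ℤ) ∣ (p : ℤ) ^ k := dvd_trans (Int.natCast_dvd_natCast.mpr hld) h2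
    have h4 : l ∣ p ^ k := by exact_mod_cast h3
    exact (Nat.prime_dvd_prime_iff_eq hl hp.out).mp (hl.dvd_of_dvd_pow h4)
  · set s0 : ℚ := q - r0 with hs0
    have hqr : s0 = (t : ℚ) / (m : ℚ) := by
      have hden' : (q.den : ℚ) = (p : ℚ) ^ k * m := by exact_mod_cast hden.symm
      have ht' : (q.num : ℚ) - c * m = (p : ℚ) ^ k * t := by exact_mod_cast ht
      have hpkQ : ((p : ℚ) ^ k) ≠ 0 := by exact_mod_cast hpk0
      have hmQ : (m : ℚ) ≠ 0 := by exact_mod_cast hm0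
      have hq_eq : (q : ℚ) = (q.num : ℚ) / ((p : ℚ) ^ k * m) := by
        rw [← hden']; exact (Rat.num_div_den q).symm
      have h1 : s0 = ((q.num : ℚ) - c * m) / ((p : ℚ) ^ k * (m : ℚ)) := by
        rw [hs0, hr0]
        nth_rewrite 1 [hq_eq]
        rw [div_sub_div _ _ (mul_ne_zero hpkQ hmQ) hpkQ,
          div_eq_div_iff (mul_ne_zero (mul_ne_zero hpkQ hmQ) hpkQ) (mul_ne_zero hpkQ hmQ)]
        ring
      rw [h1, ht', mul_div_mul_left _ _ hpkQ]
    have hr1 : ‖(s0 : ℚ_[p])‖ ≤ 1 := by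
      apply Padic.norm_rat_le_one
      intro hpd
      rw [hqr] at hpd
      have h1 : ((t : ℚ) / (m : ℚ)) = Rat.divInt t (m : ℤ) := by
        rw [Rat.divInt_eq_div]; push_cast; ring
      rw [h1] at hpd
      have h2 : ((Rat.divInt t (m : ℤ)).den : ℤ) ∣ (m : ℤ) := Rat.den_dvd t _
      exact hpm (by exact_mod_cast dvd_trans (Int.natCast_dvd_natCast.mpr hpd) h2)
    have hcast : ((s0 : ℚ) : ℚ_[p]) = (q : ℚ_[p]) - (r0 : ℚ_[p]) := by
      rw [hs0]; push_cast; ring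
    have hsplit : b - (r0 : ℚ_[p]) = (b - q) + ((s0 : ℚ) : ℚ_[p]) := by
      rw [hcast]; ring
    rw [hsplit]
    exact le_trans (Padic.nonarchimedean _ _) (max_le hq.le hr1)

/-- For a finite set `S` of primes, `ℤ[S⁻¹]` embedded diagonally in
`ℝ × ∏_{p∈S} ℚ_p` is a discrete and cocompact subgroup:
(i) the only `x ∈ ℤ[S⁻¹]` with `|x| < 1/2` and `x ∈ ℤ_p` for all `p ∈ S` is `0`;
(ii) every point of `ℝ × ∏_{p∈S} ℚ_p` lies in `x + ([0,1] × ∏ ℤ_p)` for some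
`x ∈ ℤ[S⁻¹]`. -/
theorem stmt2 (S : Finset Nat.Primes) :
    (∀ x : ℚ, (∀ q : Nat.Primes, (q : ℕ) ∣ x.den → q ∈ S) →
      |(x : ℝ)| < 1 / 2 →
      (∀ p ∈ S, ‖((x : ℚ) : ℚ_[(p : ℕ)])‖ ≤ 1) → x = 0)
    ∧
    (∀ (a : ℝ) (ap : (p : Nat.Primes) → p ∈ S → ℚ_[(p : ℕ)]),
      ∃ x : ℚ, (∀ q : Nat.Primes, (q : ℕ) ∣ x.den → q ∈ S) ∧
        a - (x : ℝ) ∈ Set.Icc (0 : ℝ) 1 ∧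
        ∀ (p : Nat.Primes) (hp : p ∈ S), ‖ap p hp - ((x : ℚ) : ℚ_[(p : ℕ)])‖ ≤ 1) := by
  constructor
  · intro x hden habs hnorm
    by_contra hx
    have hden1 : x.den = 1 := by
      by_contra hd1
      obtain ⟨l, hl, hld⟩ := Nat.exists_prime_and_dvd hd1
      have hlS : (⟨l, hl⟩ : Nat.Primes) ∈ S := hden ⟨l, hl⟩ hld
      haveI : Fact l.Prime := ⟨hl⟩
      have h1 := hnorm ⟨l, hl⟩ hlS
      rw [Padic.eq_padicNorm] at h1
      have h2 : (1 : ℝ) < padicNorm l x := by exact_mod_cast key1 (hp := ⟨hl⟩) hx hld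
      linarith
    have hint : (x.num : ℚ) = x := by
      conv_rhs => rw [← Rat.num_div_den x]
      rw [hden1]; simp
    have : |(x.num : ℝ)| < 1 / 2 := by
      rw [show ((x.num : ℝ)) = (x : ℝ) by exact_mod_cast congrArg (Rat.cast (K := ℝ)) hint]
      exact habs
    have h0 : x.num = 0 := by
      by_contra h
      have : (1 : ℝ) ≤ |(x.num : ℝ)| := by
        rw [← Int.cast_abs]; exact_mod_cast Int.one_le_abs (by omega)
      linarith
    exact hx (by rw [← hint, h0]; norm_num)
  · intro a ap
    classical
    -- choose r_p for each p ∈ S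
    choose r hr1 hr2 using fun (p : Nat.Primes) (hp : p ∈ S) => key2 (p : ℕ) (ap p hp)
    set x0 : ℚ := ∑ p ∈ S.attach, r p p.2 with hx0
    set x : ℚ := x0 + (⌊a - (x0 : ℝ)⌋ : ℚ) with hx
    have hdenx0 : ∀ q : Nat.Primes, (q : ℕ) ∣ x0.den → q ∈ S := by
      have : ∀ t : Finset {p // p ∈ S}, ∀ q : Nat.Primes,
          (q : ℕ) ∣ (∑ p ∈ t, r p p.2).den → q ∈ S := by
        intro t
        induction t using Finset.induction with
        | empty => intro q hq; simp at hq; exact absurd hq q.2.one_lt.ne'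
        | insert _ _ hni ih =>
          rename_i b t'
          intro q hq
          rw [Finset.sum_insert hni] at hq
          have h1 := dvd_trans hq (Rat.add_den_dvd _ _)
          rcases (Nat.Prime.dvd_mul q.2).mp h1 with h | h
          · have := hr1 b b.2 (q : ℕ) q.2 h
            have : b.1 = q := Nat.Primes.coe_nat_injective this.symm
            rw [← this]; exact b.2
          · exact ih q h
      exact this S.attach
    refine ⟨x, ?_, ?_, ?_⟩
    · intro q hq
      rw [hx] at hq
      have h1 := dvd_trans hq (Rat.add_den_dvd _ _)
      rw [Rat.den_intCast, mul_one] at h1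
      exact hdenx0 q h1
    · rw [hx]
      push_cast
      constructor
      · have := Int.floor_le (a - (x0 : ℝ)); linarith
      · have := Int.lt_floor_add_one (a - (x0 : ℝ)); linarith
    · intro p hp
      have hsum : ∀ q : {p // p ∈ S}, q.1 ≠ p →
          ‖((r q q.2 : ℚ) : ℚ_[(p : ℕ)])‖ ≤ 1 := by
        intro q hqp
        apply Padic.norm_rat_le_one
        intro hpd
        have := hr1 q q.2 (p : ℕ) p.2 hpd
        exact hqp (Nat.Primes.coe_nat_injective this.symm)
      -- split the sum
      have hmem : (⟨p, hp⟩ : {p // p ∈ S}) ∈ S.attach := S.mem_attach _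
      have hsplit : x0 = r p hp + ∑ q ∈ S.attach.erase ⟨p, hp⟩, r q q.2 := by
        rw [hx0, ← Finset.add_sum_erase _ _ hmem]
      have hrest : ‖((∑ q ∈ S.attach.erase ⟨p, hp⟩, r q q.2 : ℚ) : ℚ_[(p : ℕ)])‖ ≤ 1 := by
        push_cast
        refine Finset.sum_induction _ (fun z => ‖z‖ ≤ 1) ?_ (by simp) ?_
        · intro a b ha hb
          exact le_trans (Padic.nonarchimedean a b) (max_le ha hb)
        · intro q hq
          have hqp : q.1 ≠ p := by
            intro h
            have : q = (⟨p, hp⟩ : {p // p ∈ S}) := Subtype.ext h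
            exact (Finset.mem_erase.mp hq).1 this
          exact hsum q hqp
      have hfloor : ‖(((⌊a - (x0 : ℝ)⌋ : ℚ) : ℚ_[(p : ℕ)]))‖ ≤ 1 := by
        push_cast
        exact Padic.norm_int_le_one _
      have hmain : ap p hp - ((x : ℚ) : ℚ_[(p : ℕ)]) =
          (ap p hp - ((r p hp : ℚ) : ℚ_[(p : ℕ)]))
          + (-(((∑ q ∈ S.attach.erase ⟨p, hp⟩, r q q.2 : ℚ) : ℚ_[(p : ℕ)]))
             + (-(((⌊a - (x0 : ℝ)⌋ : ℚ) : ℚ_[(p : ℕ)])))) := by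
        rw [hx, hsplit]; push_cast; ring
      rw [hmain]
      refine le_trans (Padic.nonarchimedean _ _) (max_le (hr2 p hp) ?_)
      refine le_trans (Padic.nonarchimedean _ _) (max_le ?_ ?_)
      · rw [norm_neg]; exact hrest
      · rw [norm_neg]; exact hfloor
end

section
/- Let G be a topological group acting continuously on a locally compact, second countable Hausdorff space Z. Let μ_i, μ be nonzero locally finite Borel measures on Z and c_i > 0 positive reals such that c_i·∫ f dμ_i → ∫ f dμ for every compactly supported continuous f : Z → ℝ. Suppose each μ_i is invariant under the action of an element g_i ∈ G (i.e., the pushforward of μ_i under z ↦ g_i • z equals μ_i), and g_i → g in G. Then μ is invariant under the action of g. -/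
open MeasureTheory Filter Set Pointwise

/-- Two locally finite Borel measures on a locally compact second countable T2 space that
give equal integrals to all compactly supported continuous functions are equal. -/
lemma ext_cc_aux {Z : Type*} [TopologicalSpace Z] [LocallyCompactSpace Z]
    [SecondCountableTopology Z] [T2Space Z] [MeasurableSpace Z] [BorelSpace Z]
    (μ ν : Measure Z) [IsLocallyFiniteMeasure μ] [IsLocallyFiniteMeasure ν]
    (h : ∀ f : Z → ℝ, Continuous f → HasCompactSupport f → ∫ z, f z ∂μ = ∫ z, f z ∂ν) :
    μ = ν := by
  have hK : ∀ K : Set Z, IsCompact K → μ K = ν K := by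
    intro K hKc
    rw [hKc.measure_eq_biInf_integral_hasCompactSupport μ,
        hKc.measure_eq_biInf_integral_hasCompactSupport ν]
    exact iInf_congr fun f => iInf_congr fun hf => iInf_congr fun hfc =>
      iInf_congr fun _ => iInf_congr fun _ => by rw [h f hf hfc]
  have hU : ∀ U : Set Z, IsOpen U → μ U = ν U := by
    intro U hUo
    rw [hUo.measure_eq_iSup_isCompact, hUo.measure_eq_iSup_isCompact]
    exact iSup_congr fun K => iSup_congr fun _ => iSup_congr fun hKc => hK K hKc
  ext s _
  rw [Set.measure_eq_iInf_isOpen, Set.measure_eq_iInf_isOpen]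
  exact iInf_congr fun U => iInf_congr fun _ => iInf_congr fun hUo => hU U hUo

/-- If locally finite measures `μ_i` on `Z` (acted on continuously by a
topological group `G`) converge, after positive rescaling, to `μ` against all
compactly supported continuous functions, each `μ_i` is invariant under `g_i`,
and `g_i → g`, then `μ` is invariant under `g`. -/
theorem stmt4 {G Z : Type*} [Group G] [TopologicalSpace G] [IsTopologicalGroup G]
    [TopologicalSpace Z] [LocallyCompactSpace Z] [SecondCountableTopology Z] [T2Space Z]
    [MeasurableSpace Z] [BorelSpace Z]
    [MulAction G Z] [ContinuousSMul G Z]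
    (μi : ℕ → Measure Z) (μ : Measure Z)
    (hμi0 : ∀ i, μi i ≠ 0) (hμ0 : μ ≠ 0)
    (hμiloc : ∀ i, IsLocallyFiniteMeasure (μi i)) (hμloc : IsLocallyFiniteMeasure μ)
    (c : ℕ → ℝ) (hc : ∀ i, 0 < c i)
    (hconv : ∀ f : Z → ℝ, Continuous f → HasCompactSupport f →
      Tendsto (fun i => c i * ∫ z, f z ∂(μi i)) atTop (nhds (∫ z, f z ∂μ)))
    (g : ℕ → G) (g₀ : G)
    (hginv : ∀ i, Measure.map (fun z => g i • z) (μi i) = μi i)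
    (hg : Tendsto g atTop (nhds g₀)) :
    Measure.map (fun z => g₀ • z) μ = μ := by
  haveI := hμloc
  have hgm : Continuous fun z : Z => g₀ • z := continuous_const_smul g₀
  -- the pushforward is locally finite
  haveI hmapfc : IsFiniteMeasureOnCompacts (Measure.map (fun z => g₀ • z) μ) := by
    constructor
    intro K hK
    rw [Measure.map_apply hgm.measurable hK.measurableSet]
    have hpre : (fun z : Z => g₀ • z) ⁻¹' K = g₀⁻¹ • K := by
      ext z
      simp [Set.mem_smul_set_iff_inv_smul_mem]
    rw [hpre]
    exact (hK.smul g₀⁻¹).measure_lt_top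
  apply ext_cc_aux
  intro f hf hfc
  rw [integral_map hgm.aemeasurable hf.aestronglyMeasurable]
  -- goal : ∫ z, f (g₀ • z) ∂μ = ∫ z, f z ∂μ
  set K := tsupport f with hKdef
  have hKc : IsCompact K := hfc
  have hS : IsCompact (insert g₀ (Set.range g)) := hg.isCompact_insert_range
  set S := insert g₀ (Set.range g) with hSdef
  have hC : IsCompact (S⁻¹ • K) := hS.inv.smul_set hKc
  set C := S⁻¹ • K with hCdef
  have hout : ∀ a ∈ S, ∀ z, z ∉ C → f (a • z) = 0 := by
    intro a ha z hz
    by_contra h0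
    apply hz
    have hmem : a • z ∈ K := subset_tsupport f h0
    have : a⁻¹ • (a • z) ∈ C := Set.smul_mem_smul (Set.inv_mem_inv.mpr ha) hmem
    simpa using this
  have hg₀S : g₀ ∈ S := Set.mem_insert _ _
  have hgiS : ∀ i, g i ∈ S := fun i => Set.mem_insert_of_mem _ (Set.mem_range_self i)
  -- a compactly supported function ≥ 1 on C
  obtain ⟨φ, hφ1, -, hφc, hφ01⟩ :=
    exists_continuous_one_zero_of_isCompact hC isClosed_empty (by simp)
  set L := ∫ z, φ z ∂μ with hLdef
  have hL0 : 0 ≤ L := integral_nonneg fun z => (hφ01 z).1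
  set M := L + 1 with hMdef
  have hM0 : 0 < M := by linarith
  have hbound : ∀ᶠ i in atTop, c i * ((μi i) C).toReal ≤ M := by
    have hev : ∀ᶠ x in nhds L, x ≤ M := eventually_le_nhds (by linarith)
    filter_upwards [(hconv φ φ.continuous hφc).eventually hev] with i hi
    haveI := hμiloc i
    have h1 : ((μi i) C).toReal ≤ ∫ z, φ z ∂(μi i) := by
      have hint := φ.continuous.integrable_of_hasCompactSupport hφc (μ := μi i)
      have hle := hint.measure_le_integral (Eventually.of_forall fun x => (hφ01 x).1)
        (fun x hx => by rw [hφ1 hx]; exact le_refl 1)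
      calc ((μi i) C).toReal ≤ (ENNReal.ofReal (∫ z, φ z ∂(μi i))).toReal :=
            ENNReal.toReal_mono ENNReal.ofReal_ne_top hle
        _ = ∫ z, φ z ∂(μi i) :=
            ENNReal.toReal_ofReal (integral_nonneg fun z => (hφ01 z).1)
        _ ≤ ∫ z, φ z ∂(μi i) := le_refl _
    nlinarith [(hc i).le, ENNReal.toReal_nonneg (a := (μi i) C)]
  -- integral of f against μi i is invariant under g i
  have hinv : ∀ i, ∫ z, f (g i • z) ∂(μi i) = ∫ z, f z ∂(μi i) := by
    intro i
    conv_rhs => rw [← hginv i]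
    rw [integral_map (continuous_const_smul (g i)).measurable.aemeasurable
      hf.aestronglyMeasurable]
  have hB : Tendsto (fun i => c i * ∫ z, f (g₀ • z) ∂(μi i)) atTop
      (nhds (∫ z, f (g₀ • z) ∂μ)) :=
    hconv _ (hf.comp hgm) (hfc.comp_homeomorph (Homeomorph.smul g₀))
  have hA : Tendsto (fun i => c i * ∫ z, f (g i • z) ∂(μi i)) atTop
      (nhds (∫ z, f z ∂μ)) := by
    simp only [hinv]
    exact hconv f hf hfc
  have T1 : Tendsto (fun i => c i * ∫ z, f (g i • z) ∂(μi i)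
      - c i * ∫ z, f (g₀ • z) ∂(μi i)) atTop
      (nhds (∫ z, f z ∂μ - ∫ z, f (g₀ • z) ∂μ)) := hA.sub hB
  have T2 : Tendsto (fun i => c i * ∫ z, f (g i • z) ∂(μi i)
      - c i * ∫ z, f (g₀ • z) ∂(μi i)) atTop (nhds 0) := by
    rw [NormedAddCommGroup.tendsto_nhds_zero]
    intro ε hε
    set ε' := ε / (2 * M) with hε'def
    have hε'0 : 0 < ε' := by positivity
    -- tube lemma
    obtain ⟨u, v, hu, hv, hg₀u, hCv, huv⟩ :=
      generalized_tube_lemma isCompact_singleton hC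
        (isOpen_lt ((hf.comp (continuous_fst.smul continuous_snd)).sub
          (hf.comp (continuous_const_smul g₀ |>.comp continuous_snd))).abs continuous_const)
        (by
          rintro ⟨a, z⟩ ⟨ha, hz⟩
          simp only [Set.mem_singleton_iff] at ha
          subst ha
          show |f ((g₀, z).1 • (g₀, z).2) - f (g₀ • (g₀, z).2)| < ε'
          simpa using hε'0)
    have hgu : ∀ᶠ i in atTop, g i ∈ u := hg.eventually (hu.eventually_mem (by simpa using hg₀u))
    filter_upwards [hgu, hbound] with i hgiu hbi
    haveI := hμiloc i
    have I1 : Integrable (fun z => f (g i • z)) (μi i) :=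
      (hf.comp (continuous_const_smul (g i))).integrable_of_hasCompactSupport
        (hfc.comp_homeomorph (Homeomorph.smul (g i)))
    have I2 : Integrable (fun z => f (g₀ • z)) (μi i) :=
      (hf.comp hgm).integrable_of_hasCompactSupport (hfc.comp_homeomorph (Homeomorph.smul g₀))
    have hCm : MeasurableSet C := hC.isClosed.measurableSet
    have Iind : Integrable (C.indicator fun _ => ε') (μi i) :=
      (integrable_indicator_iff hCm).2 (integrableOn_const hC.measure_lt_top.ne)
    have hptwise : ∀ z, |f (g i • z) - f (g₀ • z)| ≤ C.indicator (fun _ => ε') z := by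
      intro z
      by_cases hz : z ∈ C
      · rw [Set.indicator_of_mem hz]
        exact le_of_lt (huv (Set.mk_mem_prod hgiu (hCv hz)))
      · rw [Set.indicator_of_notMem hz, hout _ (hgiS i) _ hz, hout _ hg₀S _ hz]
        simp
    have hint_le : |∫ z, (f (g i • z) - f (g₀ • z)) ∂(μi i)| ≤ ((μi i) C).toReal * ε' := by
      calc |∫ z, (f (g i • z) - f (g₀ • z)) ∂(μi i)|
          ≤ ∫ z, |f (g i • z) - f (g₀ • z)| ∂(μi i) := by
            simpa [Real.norm_eq_abs] using
              norm_integral_le_integral_norm (μ := μi i) fun z => f (g i • z) - f (g₀ • z)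
        _ ≤ ∫ z, C.indicator (fun _ => ε') z ∂(μi i) :=
            integral_mono (I1.sub I2).abs Iind hptwise
        _ = ((μi i) C).toReal * ε' := by
            rw [integral_indicator_const _ hCm]; simp [smul_eq_mul, measureReal_def]
    rw [← mul_sub, ← integral_sub I1 I2]
    have : ‖c i * ∫ z, (f (g i • z) - f (g₀ • z)) ∂(μi i)‖
        ≤ c i * (((μi i) C).toReal * ε') := by
      rw [Real.norm_eq_abs, abs_mul, abs_of_pos (hc i)]
      exact mul_le_mul_of_nonneg_left hint_le (hc i).le
    have h2 : c i * (((μi i) C).toReal * ε') ≤ M * ε' := by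
      rw [← mul_assoc]
      exact mul_le_mul_of_nonneg_right hbi hε'0.le
    have h3 : M * ε' < ε := by
      rw [hε'def]
      rw [mul_div_assoc']
      rw [div_lt_iff₀ (by positivity)]
      nlinarith
    linarith
  have := tendsto_nhds_unique T1 T2
  linarith
end

section
/- Let H be a locally compact, second countable Hausdorff topological group, K a compact subgroup and W a closed subgroup of H such that the multiplication map K × W → H, (k,w) ↦ k·w, is a homeomorphism. Let μ_W be a right Haar measure on W and let μ be a locally finite Borel measure on H that is right W-invariant (the pushforward of μ under h ↦ h·w₀ equals μ for every w₀ ∈ W). Then there exists a Borel measure ν on K such that for every Borel measurable function f : H → [0,∞], ∫_H f dμ = ∫_K ( ∫_W f(k·w) dμ_W(w) ) dν(k). -/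
open MeasureTheory

/-- Disintegration of a right `W`-invariant locally finite measure on `H = K·W`:
there is a measure `ν` on `K` such that
`∫ f dμ = ∫_K ∫_W f(k·w) dμ_W(w) dν(k)` for all measurable `f : H → [0,∞]`. -/
theorem stmt5 {H : Type*} [Group H] [TopologicalSpace H] [IsTopologicalGroup H]
    [LocallyCompactSpace H] [SecondCountableTopology H] [T2Space H]
    [MeasurableSpace H] [BorelSpace H]
    (K W : Subgroup H) (hK : IsCompact (K : Set H)) (hW : IsClosed (W : Set H))
    (hKW : IsHomeomorph (fun p : K × W => (p.1 : H) * (p.2 : H)))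
    (μW : Measure W) (hμW0 : μW ≠ 0) (hμWloc : IsLocallyFiniteMeasure μW)
    (hμWinv : μW.IsMulRightInvariant)
    (μ : Measure H) (hμloc : IsLocallyFiniteMeasure μ)
    (hμinv : ∀ w : W, Measure.map (fun h => h * (w : H)) μ = μ) :
    ∃ ν : Measure K, ∀ f : H → ENNReal, Measurable f →
      ∫⁻ h, f h ∂μ = ∫⁻ k, (∫⁻ w, f ((k : H) * (w : H)) ∂μW) ∂ν := by
  classical
  haveI : LocallyCompactSpace W := hW.locallyCompactSpace
  haveI : CompactSpace K := isCompact_iff_compactSpace.mp hK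
  haveI : SecondCountableTopology W :=
    TopologicalSpace.Subtype.secondCountableTopology (W : Set H)
  haveI : SecondCountableTopology K :=
    TopologicalSpace.Subtype.secondCountableTopology (K : Set H)
  haveI : BorelSpace W := Subtype.borelSpace (W : Set H)
  haveI : BorelSpace K := Subtype.borelSpace (K : Set H)
  haveI : SigmaCompactSpace W := inferInstance
  haveI : BorelSpace (↥K × ↥W) := inferInstance
  -- the homeomorphism
  set Φ : (↥K × ↥W) ≃ₜ H := hKW.homeomorph _ with hΦdef
  have hΦapp : ∀ p : ↥K × ↥W, Φ p = (p.1 : H) * (p.2 : H) := fun p => rfl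
  -- the pulled-back measure
  set μ' : Measure (↥K × ↥W) := μ.map Φ.symm with hμ'def
  have hmapΦ : μ'.map Φ = μ := by
    rw [hμ'def, Measure.map_map Φ.measurable Φ.symm.measurable]
    simp
  haveI : IsFiniteMeasureOnCompacts μ' := by
    rw [hμ'def]
    exact Measure.IsFiniteMeasureOnCompacts.map μ Φ.symm
  -- invariance of μ' under right translation in the second coordinate
  have hμ'inv : ∀ w : W, μ'.map (fun p : ↥K × ↥W => (p.1, p.2 * w)) = μ' := by
    intro w
    have hTmeas : Measurable (fun p : ↥K × ↥W => (p.1, p.2 * w)) :=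
      measurable_fst.prodMk (measurable_snd.mul_const w)
    have hcomp : (fun p : ↥K × ↥W => (p.1, p.2 * w)) ∘ Φ.symm
        = Φ.symm ∘ (fun h : H => h * (w : H)) := by
      funext h
      apply Φ.injective
      simp only [Function.comp_apply, Homeomorph.apply_symm_apply, hΦapp]
      push_cast
      rw [← mul_assoc, ← hΦapp, Homeomorph.apply_symm_apply, ← hΦapp, Homeomorph.apply_symm_apply]
    rw [hμ'def, Measure.map_map hTmeas Φ.symm.measurable, hcomp,
      ← Measure.map_map Φ.symm.measurable (measurable_mul_const (w : H)), hμinv w]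
  -- μW gives positive mass to open sets
  haveI : μW.IsMulRightInvariant := hμWinv
  haveI : μW.IsOpenPosMeasure := by
    have hWuniv : μW.inv Set.univ ≠ 0 := by
      rw [Measure.inv_apply, Set.inv_univ]
      simpa [Measure.measure_univ_eq_zero] using hμW0
    have : ∃ n, μW.inv (compactCovering ↥W n) ≠ 0 := by
      by_contra hcon
      push_neg at hcon
      apply hWuniv
      rw [← iUnion_compactCovering ↥W]
      exact measure_iUnion_null hcon
    obtain ⟨n, hn⟩ := this
    haveI : μW.inv.IsOpenPosMeasure :=
      isOpenPosMeasure_of_mulLeftInvariant_of_compact _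
        (isCompact_compactCovering ↥W n) hn
    have := Measure.IsOpenPosMeasure.inv (μ := μW.inv)
    rwa [Measure.inv_inv] at this
  -- a compact neighborhood of 1 in W with positive finite measure
  obtain ⟨S, hScomp, hSnhds⟩ := exists_compact_mem_nhds (1 : ↥W)
  have hSmeas : MeasurableSet S := hScomp.measurableSet
  have hS0 : μW S ≠ 0 :=
    (μW.measure_pos_of_nonempty_interior ⟨1, mem_interior_iff_mem_nhds.2 hSnhds⟩).ne'
  have hSfin : μW S ≠ ⊤ := hScomp.measure_lt_top.ne
  -- key rectangle identity via uniqueness of Haar measure on W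
  have key : ∀ A : Set ↥K, MeasurableSet A → ∀ B : Set ↥W, MeasurableSet B →
      μ' (A ×ˢ B) * μW S = μ' (A ×ˢ S) * μW B := by
    intro A hA
    set mA : Measure ↥W := (μ'.restrict (A ×ˢ (Set.univ : Set ↥W))).map Prod.snd with hmA
    have hmAapp : ∀ B : Set ↥W, MeasurableSet B → mA B = μ' (A ×ˢ B) := by
      intro B hB
      rw [hmA, Measure.map_apply measurable_snd hB,
        Measure.restrict_apply (measurable_snd hB)]
      congr 1
      ext p
      simp [Set.mem_prod, and_comm]
    haveI : mA.IsMulRightInvariant := by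
      constructor
      intro w
      refine Measure.ext fun B hB => ?_
      rw [Measure.map_apply (measurable_mul_const w) hB,
        hmAapp _ ((measurable_mul_const w) hB), hmAapp _ hB]
      have h2 : (fun p : ↥K × ↥W => (p.1, p.2 * w)) ⁻¹' (A ×ˢ B)
          = A ×ˢ ((fun v => v * w) ⁻¹' B) := by
        ext p; simp [Set.mem_prod]
      calc μ' (A ×ˢ ((fun v => v * w) ⁻¹' B))
          = μ' ((fun p : ↥K × ↥W => (p.1, p.2 * w)) ⁻¹' (A ×ˢ B)) := by rw [h2]
        _ = (μ'.map (fun p : ↥K × ↥W => (p.1, p.2 * w))) (A ×ˢ B) :=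
              (Measure.map_apply (measurable_fst.prodMk (measurable_snd.mul_const w))
                (hA.prod hB)).symm
        _ = μ' (A ×ˢ B) := by rw [hμ'inv w]
    haveI : IsFiniteMeasureOnCompacts mA := by
      constructor
      intro B hB
      rw [hmAapp B hB.measurableSet]
      calc μ' (A ×ˢ B) ≤ μ' ((Set.univ : Set ↥K) ×ˢ B) :=
            measure_mono (Set.prod_mono (Set.subset_univ A) le_rfl)
        _ < ⊤ := (isCompact_univ.prod hB).measure_lt_top
    haveI : μW.inv.IsHaarMeasure := ⟨⟩
    obtain ⟨c, hc⟩ : ∃ c : NNReal, mA.inv = c • μW.inv :=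
      ⟨_, Measure.isMulLeftInvariant_eq_smul mA.inv μW.inv⟩
    have hmAeq : mA = c • μW := by
      have h3 := congrArg Measure.inv hc
      rw [Measure.inv_inv] at h3
      rw [h3]
      simp only [Measure.inv, Measure.map_smul, Measure.inv_inv]
      rw [show (Measure.map Inv.inv (Measure.map Inv.inv μW)) = μW from
        (Measure.inv_inv μW)]
    intro B hB
    rw [← hmAapp B hB, ← hmAapp S hSmeas, hmAeq]
    simp only [Measure.smul_apply, ENNReal.smul_def, smul_eq_mul]
    ring
  -- the measure ν on K
  set ν : Measure ↥K := (μW S)⁻¹ • ((μ'.restrict ((Set.univ : Set ↥K) ×ˢ S)).map Prod.fst)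
    with hν
  have hνapp : ∀ A : Set ↥K, MeasurableSet A → ν A = (μW S)⁻¹ * μ' (A ×ˢ S) := by
    intro A hA
    rw [hν, Measure.smul_apply, Measure.map_apply measurable_fst hA,
      Measure.restrict_apply (measurable_fst hA), smul_eq_mul]
    congr 2
    ext p
    simp [Set.mem_prod, and_comm]
  haveI : SigmaFinite μW := inferInstance
  haveI : SigmaFinite ν := by
    haveI : IsFiniteMeasure ν := by
      constructor
      rw [hνapp Set.univ MeasurableSet.univ]
      exact ENNReal.mul_lt_top (ENNReal.inv_lt_top.2 (pos_iff_ne_zero.2 hS0))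
        (isCompact_univ.prod hScomp).measure_lt_top
    infer_instance
  have hprod : ν.prod μW = μ' := by
    refine Measure.prod_eq fun A B hA hB => ?_
    refine Eq.symm ?_
    calc ν A * μW B = (μW S)⁻¹ * μ' (A ×ˢ S) * μW B := by rw [hνapp A hA]
      _ = (μW S)⁻¹ * (μ' (A ×ˢ S) * μW B) := by ring
      _ = (μW S)⁻¹ * (μ' (A ×ˢ B) * μW S) := by rw [← key A hA B hB]
      _ = μ' (A ×ˢ B) * ((μW S)⁻¹ * μW S) := by ring
      _ = μ' (A ×ˢ B) := by rw [ENNReal.inv_mul_cancel hS0 hSfin, mul_one]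
  refine ⟨ν, fun f hf => ?_⟩
  rw [← hmapΦ, lintegral_map hf Φ.measurable, ← hprod,
    lintegral_prod (fun z => f (Φ z)) ((hf.comp Φ.measurable).aemeasurable)]
  rfl
end

section
/- Let H be a locally compact, second countable Hausdorff topological group, K a compact subgroup and W a closed normal unimodular subgroup of H such that the multiplication map K × W → H, (k,w) ↦ k·w, is a homeomorphism (in particular H = K·W and K ∩ W = {e}). Then a locally finite Borel measure μ on H is left W-invariant (pushforward under h ↦ w₀·h equals μ for all w₀ ∈ W) if and only if it is right W-invariant (pushforward under h ↦ h·w₀ equals μ for all w₀ ∈ W). -/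
open MeasureTheory
open scoped NNReal ENNReal

section Aux

variable {G : Type*} [Group G] [TopologicalSpace G] [IsTopologicalGroup G]
    [LocallyCompactSpace G] [SecondCountableTopology G] [T2Space G]
    [MeasurableSpace G] [BorelSpace G]
    {κ : Type*} [TopologicalSpace κ] [CompactSpace κ] [T2Space κ]
    [MeasurableSpace κ] [BorelSpace κ]

/-- A measure on `κ × G` (with `κ` compact) that is invariant under left translations in the
second coordinate is a product of a finite measure and a Haar measure. -/
lemma aux_left (lam : Measure G) [lam.IsHaarMeasure] [SigmaFinite lam]
    (ν : Measure (κ × G)) [IsFiniteMeasureOnCompacts ν]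
    (hinv : ∀ w₀ : G, ν.map (fun p => (p.1, w₀ * p.2)) = ν) :
    ∃ σ : Measure κ, IsFiniteMeasure σ ∧ ν = σ.prod lam := by
  obtain ⟨C₀, hC₀c, hC₀mem⟩ := exists_compact_mem_nhds (1 : G)
  have hC₀meas : MeasurableSet C₀ := hC₀c.isClosed.measurableSet
  have h0 : lam C₀ ≠ 0 := (Measure.measure_pos_of_mem_nhds lam hC₀mem).ne'
  have hfin : lam C₀ ≠ ⊤ := hC₀c.measure_lt_top.ne
  have key : ∀ B : Set κ, MeasurableSet B → ∃ c : ℝ≥0, ∀ C : Set G, MeasurableSet C →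
      ν (B ×ˢ C) = c * lam C := by
    intro B hB
    set ρ : Measure G := Measure.map Prod.snd (ν.restrict (B ×ˢ Set.univ)) with hρ
    have hρap : ∀ C : Set G, MeasurableSet C → ρ C = ν (B ×ˢ C) := by
      intro C hC
      rw [hρ, Measure.map_apply measurable_snd hC,
        Measure.restrict_apply (measurable_snd hC)]
      congr 1
      ext p
      simp [Set.mem_prod, and_comm]
    haveI : ρ.IsMulLeftInvariant := by
      refine ⟨fun g => ?_⟩
      ext C hC
      have hCg : MeasurableSet ((g * ·) ⁻¹' C) := (measurable_const_mul g) hC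
      rw [Measure.map_apply (measurable_const_mul g) hC, hρap _ hCg, hρap _ hC]
      have hmeas : Measurable (fun p : κ × G => (p.1, g * p.2)) :=
        measurable_fst.prodMk (measurable_snd.const_mul g)
      have hpre : (fun p : κ × G => (p.1, g * p.2)) ⁻¹' (B ×ˢ C)
          = B ×ˢ ((g * ·) ⁻¹' C) := by
        ext p; simp [Set.mem_prod]
      conv_rhs => rw [← hinv g]
      rw [Measure.map_apply hmeas (hB.prod hC), hpre]
    haveI : IsFiniteMeasureOnCompacts ρ := by
      refine ⟨fun L hL => ?_⟩
      rw [hρap L hL.isClosed.measurableSet]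
      calc ν (B ×ˢ L) ≤ ν (Set.univ ×ˢ L) :=
            measure_mono (Set.prod_mono_left (Set.subset_univ B))
        _ < ⊤ := (isCompact_univ.prod hL).measure_lt_top
    have huniq := Measure.isMulLeftInvariant_eq_smul ρ lam
    refine ⟨Measure.haarScalarFactor ρ lam, fun C hC => ?_⟩
    rw [← hρap C hC]
    conv_lhs => rw [huniq]
    rw [Measure.smul_apply, ENNReal.smul_def, smul_eq_mul]
  set σ : Measure κ := (lam C₀)⁻¹ • Measure.map Prod.fst (ν.restrict (Set.univ ×ˢ C₀)) with hσ
  have hσap : ∀ B : Set κ, MeasurableSet B → σ B = (lam C₀)⁻¹ * ν (B ×ˢ C₀) := by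
    intro B hB
    rw [hσ, Measure.smul_apply, smul_eq_mul, Measure.map_apply measurable_fst hB,
      Measure.restrict_apply (measurable_fst hB)]
    congr 2
    ext p; simp [Set.mem_prod]
  have hrect : ∀ B C, MeasurableSet B → MeasurableSet C → ν (B ×ˢ C) = σ B * lam C := by
    intro B C hB hC
    obtain ⟨c, hc⟩ := key B hB
    have hcc : (lam C₀)⁻¹ * ((c : ℝ≥0∞) * lam C₀) = (c : ℝ≥0∞) := by
      rw [mul_comm (c : ℝ≥0∞), ← mul_assoc, ENNReal.inv_mul_cancel h0 hfin, one_mul]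
    rw [hσap B hB, hc C hC, hc C₀ hC₀meas, hcc]
  haveI hσfin : IsFiniteMeasure σ := by
    constructor
    rw [hσap Set.univ MeasurableSet.univ]
    exact ENNReal.mul_lt_top (ENNReal.inv_lt_top.2 (pos_iff_ne_zero.mpr h0))
      (isCompact_univ.prod hC₀c).measure_lt_top
  exact ⟨σ, hσfin, (Measure.prod_eq (fun s t hs ht => hrect s t hs ht)).symm⟩

/-- Right-translation version of `aux_left`. -/
lemma aux_right (lam : Measure G) [lam.IsHaarMeasure] [lam.IsMulRightInvariant]
    [SigmaFinite lam]
    (ν : Measure (κ × G)) [IsFiniteMeasureOnCompacts ν]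
    (hinv : ∀ w₀ : G, ν.map (fun p => (p.1, p.2 * w₀)) = ν) :
    ∃ σ : Measure κ, IsFiniteMeasure σ ∧ ν = σ.prod lam := by
  have hJm : Measurable (fun p : κ × G => (p.1, p.2⁻¹)) :=
    measurable_fst.prodMk measurable_snd.inv
  set ν' : Measure (κ × G) := ν.map (fun p => (p.1, p.2⁻¹)) with hν'
  haveI : IsFiniteMeasureOnCompacts ν' := by
    have hfe : (fun p : κ × G => (p.1, p.2⁻¹))
        = ⇑((Homeomorph.refl κ).prodCongr (Homeomorph.inv G)) := by
      funext p; rfl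
    rw [hν', hfe]
    exact Measure.IsFiniteMeasureOnCompacts.map ν _
  haveI : (lam.inv).IsHaarMeasure :=
    { lt_top_of_isCompact := fun _ h => h.measure_lt_top
      open_pos := fun U hU hne => (Measure.IsOpenPosMeasure.inv (μ := lam)).open_pos U hU hne }
  have hinv' : ∀ w₀ : G, ν'.map (fun p : κ × G => (p.1, w₀ * p.2)) = ν' := by
    intro w₀
    rw [hν', Measure.map_map (measurable_fst.prodMk (measurable_snd.const_mul w₀)) hJm]
    have hce : ((fun p : κ × G => (p.1, w₀ * p.2)) ∘ (fun p : κ × G => (p.1, p.2⁻¹)))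
        = (fun p : κ × G => (p.1, p.2⁻¹)) ∘ (fun p : κ × G => (p.1, p.2 * w₀⁻¹)) := by
      funext p
      simp [Function.comp, mul_inv_rev]
    rw [hce, ← Measure.map_map hJm (measurable_fst.prodMk (measurable_snd.mul_const w₀⁻¹)),
      hinv w₀⁻¹]
  obtain ⟨σ, hσfin, hprod⟩ := aux_left lam.inv ν' hinv'
  refine ⟨σ, hσfin, ?_⟩
  have hνν' : ν = ν'.map (fun p : κ × G => (p.1, p.2⁻¹)) := by
    rw [hν', Measure.map_map hJm hJm]
    have hid : ((fun p : κ × G => (p.1, p.2⁻¹)) ∘ (fun p : κ × G => (p.1, p.2⁻¹)))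
        = id := by
      funext p; simp
    rw [hid, Measure.map_id]
  have hmp : MeasurePreserving (Prod.map (id : κ → κ) (fun x : G => x⁻¹))
      (σ.prod lam.inv) (σ.prod lam) :=
    (MeasurePreserving.id σ).prod ⟨measurable_inv, Measure.inv_inv lam⟩
  have hfe2 : (fun p : κ × G => (p.1, p.2⁻¹)) = Prod.map (id : κ → κ) (fun x : G => x⁻¹) := rfl
  rw [hνν', hprod, hfe2, hmp.map_eq]

end Aux

/-- If `H = K·W` with `K` compact and `W` a closed normal unimodular subgroup
(the multiplication map `K × W → H` being a homeomorphism), then a locally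
finite Borel measure on `H` is left `W`-invariant iff it is right `W`-invariant. -/
theorem stmt6 {H : Type*} [Group H] [TopologicalSpace H] [IsTopologicalGroup H]
    [LocallyCompactSpace H] [SecondCountableTopology H] [T2Space H]
    [MeasurableSpace H] [BorelSpace H]
    (K W : Subgroup H) (hK : IsCompact (K : Set H)) (hW : IsClosed (W : Set H))
    (hWnormal : W.Normal)
    (hWunimod : ∃ μW : Measure W, μW ≠ 0 ∧ IsLocallyFiniteMeasure μW ∧
      μW.IsMulLeftInvariant ∧ μW.IsMulRightInvariant)
    (hKW : IsHomeomorph (fun p : K × W => (p.1 : H) * (p.2 : H)))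
    (μ : Measure H) (hμloc : IsLocallyFiniteMeasure μ) :
    (∀ w : W, Measure.map (fun h => (w : H) * h) μ = μ) ↔
      (∀ w : W, Measure.map (fun h => h * (w : H)) μ = μ) := by
  obtain ⟨lam, hlam0, hlamloc, hlamleft, hlamright⟩ := hWunimod
  haveI := hlamloc; haveI := hlamleft; haveI := hlamright; haveI := hμloc
  haveI : CompactSpace ↥K := isCompact_iff_compactSpace.mp hK
  haveI : BorelSpace ↥K := Subtype.borelSpace (K : Set H)
  haveI : SecondCountableTopology ↥K := TopologicalSpace.Subtype.secondCountableTopology (K : Set H)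
  haveI : LocallyCompactSpace ↥W := hW.locallyCompactSpace
  haveI : BorelSpace ↥W := Subtype.borelSpace (W : Set H)
  haveI : SecondCountableTopology ↥W := TopologicalSpace.Subtype.secondCountableTopology (W : Set H)
  haveI : NeZero lam := ⟨hlam0⟩
  haveI : lam.Regular := inferInstance
  haveI : lam.IsHaarMeasure := {}
  haveI : SigmaFinite lam := inferInstance
  -- the homeomorphism `Φ : K × W ≃ₜ H`, `(k, w) ↦ k * w`
  set Φ : ↥K × ↥W ≃ₜ H := hKW.homeomorph _ with hΦdef
  have hΦap : ∀ p : ↥K × ↥W, Φ p = (p.1 : H) * (p.2 : H) := fun p => rfl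
  have hconj : ∀ (k : ↥K) (w : ↥W), (k : H)⁻¹ * w * k ∈ W := by
    intro k w
    simpa using hWnormal.conj_mem _ w.2 (k : H)⁻¹
  have hconj' : ∀ (k : ↥K) (w : ↥W), (k : H) * w * (k : H)⁻¹ ∈ W := by
    intro k w
    simpa using hWnormal.conj_mem _ w.2 (k : H)
  constructor
  · -- left invariant → right invariant
    intro hL w₀
    -- the homeomorphism `e : K × W ≃ₜ H`, `(k, w) ↦ w * k`
    set τ : ↥K × ↥W ≃ₜ ↥K × ↥W :=
      { toFun := fun p => (p.1, ⟨(p.1 : H)⁻¹ * p.2 * p.1, hconj p.1 p.2⟩)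
        invFun := fun p => (p.1, ⟨(p.1 : H) * p.2 * (p.1 : H)⁻¹, hconj' p.1 p.2⟩)
        left_inv := fun p => by
          refine Prod.ext rfl (Subtype.ext ?_)
          show (p.1 : H) * ((p.1 : H)⁻¹ * p.2 * p.1) * (p.1 : H)⁻¹ = (p.2 : H)
          group
        right_inv := fun p => by
          refine Prod.ext rfl (Subtype.ext ?_)
          show (p.1 : H)⁻¹ * ((p.1 : H) * p.2 * (p.1 : H)⁻¹) * p.1 = (p.2 : H)
          group
        continuous_toFun := by
          refine continuous_fst.prodMk (Continuous.subtype_mk ?_ _)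
          fun_prop
        continuous_invFun := by
          refine continuous_fst.prodMk (Continuous.subtype_mk ?_ _)
          fun_prop } with hτdef
    set e : ↥K × ↥W ≃ₜ H := τ.trans Φ with hedef
    have heap : ∀ p : ↥K × ↥W, e p = (p.2 : H) * (p.1 : H) := by
      intro p
      show Φ (τ p) = _
      rw [hΦap]
      show (p.1 : H) * ((p.1 : H)⁻¹ * p.2 * p.1) = _
      group
    set ν : Measure (↥K × ↥W) := μ.map e.symm with hνdef
    haveI : IsFiniteMeasureOnCompacts ν := Measure.IsFiniteMeasureOnCompacts.map μ e.symm
    have htrans : ∀ g : ↥W, ν.map (fun p : ↥K × ↥W => (p.1, g * p.2)) = ν := by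
      intro g
      have hgm : Measurable (fun p : ↥K × ↥W => (p.1, g * p.2)) :=
        measurable_fst.prodMk (measurable_snd.const_mul g)
      rw [hνdef, Measure.map_map hgm e.symm.continuous.measurable]
      have hcm : ((fun p : ↥K × ↥W => (p.1, g * p.2)) ∘ ⇑e.symm)
          = ⇑e.symm ∘ (fun h : H => (g : H) * h) := by
        funext h
        apply e.injective
        simp only [Function.comp_apply]
        have hh : h = ((e.symm h).2 : H) * ((e.symm h).1 : H) := by
          rw [← heap (e.symm h), e.apply_symm_apply]
        rw [heap]
        conv_rhs => rw [e.apply_symm_apply, hh]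
        rw [Subgroup.coe_mul, mul_assoc]
      rw [hcm, ← Measure.map_map e.symm.continuous.measurable
        (measurable_const_mul (g : H)), hL g]
    obtain ⟨σ, hσfin, hprod⟩ := aux_left lam ν htrans
    have hμeq : μ = ν.map e := by
      rw [hνdef, Measure.map_map e.continuous.measurable e.symm.continuous.measurable]
      have hid : (⇑e ∘ ⇑e.symm) = id := by funext x; simp
      rw [hid, Measure.map_id]
    set g : ↥K → ↥W := fun k => ⟨(k : H) * w₀ * (k : H)⁻¹, hconj' k w₀⟩ with hgdef
    have hgcont : Continuous g := by
      refine Continuous.subtype_mk ?_ _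
      fun_prop
    have hF : MeasurePreserving (fun p : ↥K × ↥W => (p.1, p.2 * g p.1))
        (σ.prod lam) (σ.prod lam) := by
      refine MeasurePreserving.skew_product (g := fun k w => w * g k)
        (MeasurePreserving.id σ) ?_ ?_
      · exact measurable_snd.mul (hgcont.measurable.comp measurable_fst)
      · exact Filter.Eventually.of_forall fun k => map_mul_right_eq_self lam (g k)
    have hRe : (fun h : H => h * (w₀ : H)) ∘ ⇑e
        = ⇑e ∘ (fun p : ↥K × ↥W => (p.1, p.2 * g p.1)) := by
      funext p
      simp only [Function.comp_apply]
      rw [heap, heap, Subgroup.coe_mul]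
      show ((p.2 : H) * p.1) * w₀ = ((p.2 : H) * ((p.1 : H) * w₀ * (p.1 : H)⁻¹)) * p.1
      group
    have hFm : Measurable (fun p : ↥K × ↥W => (p.1, p.2 * g p.1)) :=
      measurable_fst.prodMk (measurable_snd.mul (hgcont.measurable.comp measurable_fst))
    rw [hμeq, Measure.map_map (measurable_mul_const (w₀ : H)) e.continuous.measurable, hRe,
      ← Measure.map_map e.continuous.measurable hFm, hprod, hF.map_eq]
  · -- right invariant → left invariant
    intro hR w₀
    set ν : Measure (↥K × ↥W) := μ.map Φ.symm with hνdef
    haveI : IsFiniteMeasureOnCompacts ν := Measure.IsFiniteMeasureOnCompacts.map μ Φ.symm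
    have htrans : ∀ g : ↥W, ν.map (fun p : ↥K × ↥W => (p.1, p.2 * g)) = ν := by
      intro g
      have hgm : Measurable (fun p : ↥K × ↥W => (p.1, p.2 * g)) :=
        measurable_fst.prodMk (measurable_snd.mul_const g)
      rw [hνdef, Measure.map_map hgm Φ.symm.continuous.measurable]
      have hcm : ((fun p : ↥K × ↥W => (p.1, p.2 * g)) ∘ ⇑Φ.symm)
          = ⇑Φ.symm ∘ (fun h : H => h * (g : H)) := by
        funext h
        apply Φ.injective
        simp only [Function.comp_apply]
        have hh : h = ((Φ.symm h).1 : H) * ((Φ.symm h).2 : H) := by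
          rw [← hΦap (Φ.symm h), Φ.apply_symm_apply]
        rw [hΦap]
        conv_rhs => rw [Φ.apply_symm_apply, hh]
        rw [Subgroup.coe_mul, mul_assoc]
      rw [hcm, ← Measure.map_map Φ.symm.continuous.measurable
        (measurable_mul_const (g : H)), hR g]
    obtain ⟨σ, hσfin, hprod⟩ := aux_right lam ν htrans
    have hμeq : μ = ν.map Φ := by
      rw [hνdef, Measure.map_map Φ.continuous.measurable Φ.symm.continuous.measurable]
      have hid : (⇑Φ ∘ ⇑Φ.symm) = id := by funext x; simp
      rw [hid, Measure.map_id]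
    set g : ↥K → ↥W := fun k => ⟨(k : H)⁻¹ * w₀ * k, hconj k w₀⟩ with hgdef
    have hgcont : Continuous g := by
      refine Continuous.subtype_mk ?_ _
      fun_prop
    have hF : MeasurePreserving (fun p : ↥K × ↥W => (p.1, g p.1 * p.2))
        (σ.prod lam) (σ.prod lam) := by
      refine MeasurePreserving.skew_product (g := fun k w => g k * w)
        (MeasurePreserving.id σ) ?_ ?_
      · exact (hgcont.measurable.comp measurable_fst).mul measurable_snd
      · exact Filter.Eventually.of_forall fun k => map_mul_left_eq_self lam (g k)
    have hLe : (fun h : H => (w₀ : H) * h) ∘ ⇑Φ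
        = ⇑Φ ∘ (fun p : ↥K × ↥W => (p.1, g p.1 * p.2)) := by
      funext p
      simp only [Function.comp_apply]
      rw [hΦap, hΦap, Subgroup.coe_mul]
      show (w₀ : H) * ((p.1 : H) * p.2) = (p.1 : H) * (((p.1 : H)⁻¹ * w₀ * p.1) * p.2)
      group
    have hFm : Measurable (fun p : ↥K × ↥W => (p.1, g p.1 * p.2)) :=
      measurable_fst.prodMk ((hgcont.measurable.comp measurable_fst).mul measurable_snd)
    rw [hμeq, Measure.map_map (measurable_const_mul (w₀ : H)) Φ.continuous.measurable, hLe,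
      ← Measure.map_map Φ.continuous.measurable hFm, hprod, hF.map_eq]
end

section
/- Let d ≥ 1 and let S be a finite set of primes. For a place ν (ν = ∞ or ν = p ∈ S) and a row vector w ∈ ℚ_ν^d set ‖w‖_ν = max_{1≤i≤d} |w_i|_ν. Let h_∞ ∈ SL_d(ℝ) and, for each p ∈ S, let h_p be a d×d matrix with entries in ℤ_p and determinant in ℤ_p^×. Then the infimum, over all nonzero v ∈ ℤ[S⁻¹]^d (viewed in ℝ^d and in each ℚ_p^d via the diagonal embeddings), of ‖v·h_∞‖_∞ · ∏_{p∈S} ‖v·h_p‖_p equals the infimum, over all primitive integer vectors v ∈ ℤ^d (gcd of coordinates 1), of ‖v·h_∞‖_∞. -/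
section Helpers

open IsUltrametricDist

lemma vecMul_norm_le {d : ℕ} {p : ℕ} [Fact p.Prime] (h : Matrix (Fin d) (Fin d) ℚ_[p])
    (hint : ∀ i j, ‖h i j‖ ≤ 1) (x : Fin d → ℚ_[p]) {C : ℝ} (hC : 0 ≤ C)
    (hx : ∀ j, ‖x j‖ ≤ C) (i : Fin d) : ‖Matrix.vecMul x h i‖ ≤ C := by
  rw [Matrix.vecMul, dotProduct]
  apply norm_sum_le_of_forall_le_of_nonneg hC
  intro j _
  calc ‖x j * h j i‖ = ‖x j‖ * ‖h j i‖ := norm_mul _ _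
  _ ≤ C * 1 := mul_le_mul (hx j) (hint j i) (norm_nonneg _) hC
  _ = C := mul_one C

lemma det_norm_le_one {d : ℕ} {p : ℕ} [Fact p.Prime] (h : Matrix (Fin d) (Fin d) ℚ_[p])
    (hint : ∀ i j, ‖h i j‖ ≤ 1) : ‖h.det‖ ≤ 1 := by
  rw [Matrix.det_apply]
  apply norm_sum_le_of_forall_le_of_nonneg zero_le_one
  intro σ _
  have : ‖∏ i, h (σ i) i‖ ≤ 1 := by
    rw [norm_prod]
    exact Finset.prod_le_one (fun i _ => norm_nonneg _) (fun i _ => hint _ _)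
  rcases Int.units_eq_one_or (Equiv.Perm.sign σ) with h1 | h1 <;>
    simp only [h1, Units.smul_def, Units.val_one, Units.val_neg, one_smul, neg_smul, norm_neg,
      Int.cast_one] <;> simpa using this

lemma adjugate_norm_le_one {d : ℕ} {p : ℕ} [Fact p.Prime] (h : Matrix (Fin d) (Fin d) ℚ_[p])
    (hint : ∀ i j, ‖h i j‖ ≤ 1) (i j : Fin d) : ‖h.adjugate i j‖ ≤ 1 := by
  rw [Matrix.adjugate_apply]
  apply det_norm_le_one
  intro a b
  rw [Matrix.updateRow_apply]
  split
  · rcases eq_or_ne b i with rfl | hb <;> simp [Pi.single_apply, *]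
  · exact hint a b

lemma primitive_sup_norm_one {d : ℕ} (hd : 1 ≤ d) {p : ℕ} [Fact p.Prime]
    (h : Matrix (Fin d) (Fin d) ℚ_[p]) (hint : ∀ i j, ‖h i j‖ ≤ 1) (hdet : ‖h.det‖ = 1)
    (v : Fin d → ℤ) (hv : Finset.univ.gcd v = 1) :
    (⨆ i, ‖Matrix.vecMul (fun i => ((v i : ℤ) : ℚ_[p])) h i‖) = 1 := by
  haveI : Nonempty (Fin d) := Fin.pos_iff_nonempty.mp hd
  set x : Fin d → ℚ_[p] := fun i => ((v i : ℤ) : ℚ_[p]) with hx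
  set y := Matrix.vecMul x h with hy
  have hxle : ∀ j, ‖x j‖ ≤ 1 := fun j => Padic.norm_int_le_one _
  have hyle : ∀ i, ‖y i‖ ≤ 1 := fun i => vecMul_norm_le h hint x zero_le_one hxle i
  apply le_antisymm (ciSup_le hyle)
  obtain ⟨i0, hi0⟩ : ∃ i, ¬ ((p : ℤ) ∣ v i) := by
    by_contra hno
    push_neg at hno
    have : (p : ℤ) ∣ Finset.univ.gcd v := Finset.dvd_gcd fun i _ => hno i
    rw [hv] at this
    have h1 := Int.eq_one_of_dvd_one (by positivity) this
    exact_mod_cast (Fact.out : p.Prime).one_lt.ne' (by exact_mod_cast h1)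
  have hxi0 : ‖x i0‖ = 1 := by
    refine le_antisymm (hxle i0) (not_lt.mp fun hlt => hi0 ?_)
    exact_mod_cast (Padic.norm_intCast_lt_one_iff).mp hlt
  have key : h.det * x i0 = ∑ j, y j * h.adjugate j i0 := by
    have h1 : Matrix.vecMul y h.adjugate = Matrix.vecMul x (h.det • 1) := by
      rw [hy, Matrix.vecMul_vecMul, Matrix.mul_adjugate]
    have := congrFun h1 i0
    simp only [Matrix.vecMul, dotProduct, Matrix.smul_apply, Matrix.one_apply, smul_eq_mul,
      mul_ite, mul_one, mul_zero, Finset.sum_ite_eq', Finset.mem_univ, if_true] at this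
    rw [mul_comm, ← this]
  have hbd : BddAbove (Set.range fun j => ‖y j‖) := Finite.bddAbove_range _
  calc (1 : ℝ) = ‖h.det * x i0‖ := by rw [norm_mul, hdet, hxi0, one_mul]
  _ = ‖∑ j, y j * h.adjugate j i0‖ := by rw [key]
  _ ≤ ⨆ j, ‖y j‖ := by
      apply norm_sum_le_of_forall_le_of_nonneg (Real.iSup_nonneg fun j => norm_nonneg _)
      intro j _
      calc ‖y j * h.adjugate j i0‖ ≤ ‖y j‖ * 1 :=
            (norm_mul _ _).le.trans (mul_le_mul le_rfl (adjugate_norm_le_one h hint j i0)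
              (norm_nonneg _) (norm_nonneg _))
      _ = ‖y j‖ := mul_one _
      _ ≤ ⨆ j, ‖y j‖ := le_ciSup hbd j

lemma fact_zero_of_not_mem {n q : ℕ} (hq : q ∉ n.primeFactors) : n.factorization q = 0 := by
  rw [← Finsupp.notMem_support_iff, Nat.support_factorization]; exact hq

lemma prod_pow_fact_eq {n : ℕ} (hn : n ≠ 0) {T : Finset ℕ} (hT : n.primeFactors ⊆ T) :
    ∏ q ∈ T, q ^ n.factorization q = n := by
  rw [← Finset.prod_subset hT (fun x _ hx => by rw [fact_zero_of_not_mem hx, pow_zero])]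
  rw [Nat.prod_primeFactors_prod_factorization]
  exact Nat.factorization_prod_pow_eq_self hn

lemma prod_pow_fact_dvd (n : ℕ) (hn : n ≠ 0) (T : Finset ℕ) :
    (∏ q ∈ T, q ^ n.factorization q) ∣ n := by
  have h1 : ∏ q ∈ T, q ^ n.factorization q = ∏ q ∈ T ∩ n.primeFactors, q ^ n.factorization q :=
    (Finset.prod_subset Finset.inter_subset_left (fun x _ hx => by
      rw [fact_zero_of_not_mem (fun hc => hx (Finset.mem_inter.mpr ⟨by assumption, hc⟩)),
        pow_zero])).symm
  rw [h1]
  calc (∏ q ∈ T ∩ n.primeFactors, q ^ n.factorization q)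
      ∣ ∏ q ∈ n.primeFactors, q ^ n.factorization q :=
        Finset.prod_dvd_prod_of_subset _ _ _ Finset.inter_subset_right
  _ = n := prod_pow_fact_eq hn (le_refl _)

lemma norm_nat_cast_eq {p : ℕ} [Fact p.Prime] {n : ℕ} (hn : n ≠ 0) :
    ‖((n : ℚ_[p]))‖ = (((p : ℝ) ^ (n.factorization p)))⁻¹ := by
  have h0 : ((n : ℚ_[p])) = (((n : ℚ)) : ℚ_[p]) := by norm_cast
  rw [h0, Padic.eq_padicNorm,
    padicNorm.eq_zpow_of_nonzero (by exact_mod_cast hn)]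
  have h2 : padicValRat p (n : ℚ) = padicValNat p n := padicValRat.of_nat
  rw [h2, Nat.factorization_def n (Fact.out : p.Prime), zpow_neg, zpow_natCast]
  push_cast
  ring

lemma prod_norm_nat (S : Finset Nat.Primes) (n : ℕ) (hn : n ≠ 0) :
    ∏ p ∈ S.attach, ‖((n : ℚ_[(p.1 : ℕ)]))‖ =
      ((∏ q ∈ S.image (fun (a : Nat.Primes) => (a : ℕ)), q ^ n.factorization q : ℕ) : ℝ)⁻¹ := by
  have h1 : ∀ p : {x // x ∈ S}, ‖((n : ℚ_[(p.1 : ℕ)]))‖ =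
      (((p.1 : ℕ) : ℝ) ^ (n.factorization (p.1 : ℕ)))⁻¹ := fun p => norm_nat_cast_eq hn
  rw [Finset.prod_congr rfl (fun p _ => h1 p), Finset.prod_inv_distrib, inv_inj]
  push_cast
  rw [Finset.prod_attach S (fun q => ((q : ℕ) : ℝ) ^ n.factorization (q : ℕ))]
  exact (Finset.prod_image (f := fun q : ℕ => (q : ℝ) ^ n.factorization q) (s := S)
    (g := fun (a : Nat.Primes) => (a : ℕ)) (fun a _ b _ h => Nat.Primes.coe_nat_injective h)).symm

lemma int_cast_norm_natAbs {p : ℕ} [Fact p.Prime] (m : ℤ) :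
    ‖((m : ℚ_[p]))‖ = ‖((m.natAbs : ℚ_[p]))‖ := by
  rcases Int.natAbs_eq m with h | h
  · conv_lhs => rw [h, Int.cast_natCast]
  · conv_lhs => rw [h, Int.cast_neg, Int.cast_natCast]
    rw [norm_neg]

lemma one_le_key (S : Finset Nat.Primes) (c : ℚ) (hc : c ≠ 0)
    (hden : ∀ q : Nat.Primes, (q : ℕ) ∣ c.den → q ∈ S) :
    1 ≤ |(c : ℝ)| * ∏ p ∈ S.attach, ‖((c : ℚ_[(p.1 : ℕ)]))‖ := by
  set a := c.num.natAbs with ha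
  set b := c.den with hb
  have ha0 : a ≠ 0 := Int.natAbs_ne_zero.mpr (Rat.num_ne_zero.mpr hc)
  have hb0 : b ≠ 0 := c.den_nz
  set T := S.image (fun (a : Nat.Primes) => (a : ℕ)) with hT
  set Pa := ∏ q ∈ T, q ^ a.factorization q with hPa
  have hPa0 : 0 < Pa := Finset.prod_pos (fun q hq => by
    obtain ⟨r, _, rfl⟩ := Finset.mem_image.mp hq
    exact pow_pos r.2.pos _)
  have hPadvd : Pa ∣ a := prod_pow_fact_dvd a ha0 T
  have hPb : ∏ q ∈ T, q ^ b.factorization q = b := by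
    refine prod_pow_fact_eq hb0 (fun q hq => ?_)
    obtain ⟨hq1, hq2, -⟩ := Nat.mem_primeFactors.mp hq
    exact Finset.mem_image.mpr ⟨⟨q, hq1⟩, hden ⟨q, hq1⟩ hq2, rfl⟩
  have hcnorm : ∀ p : {x // x ∈ S}, ‖((c : ℚ_[(p.1 : ℕ)]))‖ =
      ‖((a : ℚ_[(p.1 : ℕ)]))‖ / ‖((b : ℚ_[(p.1 : ℕ)]))‖ := by
    intro p
    have h0 : ((c : ℚ_[(p.1 : ℕ)])) = ((c.num : ℚ_[(p.1 : ℕ)])) / ((c.den : ℚ_[(p.1 : ℕ)])) :=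
      Rat.cast_def c
    rw [h0, norm_div, int_cast_norm_natAbs]
  rw [Finset.prod_congr rfl (fun p _ => hcnorm p), Finset.prod_div_distrib,
    prod_norm_nat S a ha0, prod_norm_nat S b hb0, ← hT, ← hPa, hPb]
  have habs : |(c : ℝ)| = (a : ℝ) / (b : ℝ) := by
    rw [Rat.cast_def, abs_div, Nat.abs_cast, Nat.cast_natAbs, Int.cast_abs, hb]
  rw [habs]
  have hble : (0:ℝ) < (b:ℝ) := by exact_mod_cast Nat.pos_of_ne_zero hb0
  have hPaR : (0:ℝ) < (Pa:ℝ) := by exact_mod_cast hPa0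
  have key : ((a:ℝ)/b) * ((Pa:ℝ)⁻¹ / ((b:ℝ))⁻¹) = (a:ℝ) / Pa := by
    field_simp
  rw [key, le_div_iff₀ hPaR, one_mul]
  exact_mod_cast Nat.le_of_dvd (Nat.pos_of_ne_zero ha0) hPadvd

lemma ciSup_const_mul' {ι : Type*} [Fintype ι] [Nonempty ι] (c : ℝ) (hc : 0 ≤ c) (f : ι → ℝ) :
    (⨆ i, c * f i) = c * ⨆ i, f i := by
  rw [← Finset.sup'_univ_eq_ciSup, ← Finset.sup'_univ_eq_ciSup,
    Finset.comp_sup'_eq_sup'_comp _ (fun x => c * x) (fun x y => mul_max_of_nonneg x y hc)]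
  rfl

end Helpers

/-- For `h_∞ ∈ SL_d(ℝ)` and `h_p ∈ GL_d(ℤ_p)` (`p ∈ S`), the infimum of
`‖v·h_∞‖_∞ · ∏_{p∈S} ‖v·h_p‖_p` over nonzero `v ∈ ℤ[S⁻¹]^d` equals the infimum
of `‖v·h_∞‖_∞` over primitive integer vectors `v ∈ ℤ^d`. -/
theorem stmt13 (d : ℕ) (hd : 1 ≤ d) (S : Finset Nat.Primes)
    (hinf : Matrix (Fin d) (Fin d) ℝ) (hdetinf : hinf.det = 1)
    (hp : (p : Nat.Primes) → p ∈ S → Matrix (Fin d) (Fin d) ℚ_[(p : ℕ)])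
    (hpint : ∀ (p : Nat.Primes) (hps : p ∈ S) (i j : Fin d), ‖hp p hps i j‖ ≤ 1)
    (hpdet : ∀ (p : Nat.Primes) (hps : p ∈ S), ‖(hp p hps).det‖ = 1) :
    sInf {r : ℝ | ∃ v : Fin d → ℚ, v ≠ 0 ∧
        (∀ i, ∀ q : Nat.Primes, (q : ℕ) ∣ (v i).den → q ∈ S) ∧
        r = (⨆ i, |Matrix.vecMul (fun i => ((v i : ℚ) : ℝ)) hinf i|) *
          ∏ p ∈ S.attach,
            ⨆ i, ‖Matrix.vecMul (fun i => ((v i : ℚ) : ℚ_[(p.1 : ℕ)])) (hp p.1 p.2) i‖}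
      = sInf {r : ℝ | ∃ v : Fin d → ℤ, Finset.univ.gcd v = 1 ∧
          r = ⨆ i, |Matrix.vecMul (fun i => ((v i : ℤ) : ℝ)) hinf i|} := by
  haveI : Nonempty (Fin d) := Fin.pos_iff_nonempty.mp hd
  set A := {r : ℝ | ∃ v : Fin d → ℚ, v ≠ 0 ∧
        (∀ i, ∀ q : Nat.Primes, (q : ℕ) ∣ (v i).den → q ∈ S) ∧
        r = (⨆ i, |Matrix.vecMul (fun i => ((v i : ℚ) : ℝ)) hinf i|) *
          ∏ p ∈ S.attach,
            ⨆ i, ‖Matrix.vecMul (fun i => ((v i : ℚ) : ℚ_[(p.1 : ℕ)])) (hp p.1 p.2) i‖} with hA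
  set B := {r : ℝ | ∃ v : Fin d → ℤ, Finset.univ.gcd v = 1 ∧
          r = ⨆ i, |Matrix.vecMul (fun i => ((v i : ℤ) : ℝ)) hinf i|} with hB
  -- B ⊆ A
  have hBA : B ⊆ A := by
    rintro r ⟨u, hgcd, rfl⟩
    refine ⟨fun i => ((u i : ℤ) : ℚ), ?_, ?_, ?_⟩
    · intro h0
      have : Finset.univ.gcd u = 0 := Finset.gcd_eq_zero_iff.mpr (fun i _ => by
        have := congrFun h0 i
        simpa using this)
      rw [hgcd] at this
      exact one_ne_zero this
    · intro i q hq
      rw [Rat.den_intCast] at hq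
      exact absurd (Nat.dvd_one.mp hq) q.2.ne_one
    · have hre : (fun i => (((u i : ℤ) : ℚ) : ℝ)) = (fun i => ((u i : ℤ) : ℝ)) := by
        funext i; push_cast; ring
      have hpr : ∀ p : {x // x ∈ S},
          (⨆ i, ‖Matrix.vecMul (fun i => (((u i : ℤ) : ℚ) : ℚ_[(p.1 : ℕ)])) (hp p.1 p.2) i‖)
            = 1 := by
        intro p
        have hvec : (fun i => (((u i : ℤ) : ℚ) : ℚ_[(p.1 : ℕ)]))
            = (fun i => ((u i : ℤ) : ℚ_[(p.1 : ℕ)])) := by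
          funext i; push_cast; ring
        rw [hvec]
        exact primitive_sup_norm_one hd (hp p.1 p.2) (hpint p.1 p.2) (hpdet p.1 p.2) u hgcd
      rw [hre, Finset.prod_congr rfl (fun p _ => hpr p), Finset.prod_const_one, mul_one]
  -- lower bounds
  have hBlb : ∀ r ∈ B, (0:ℝ) ≤ r := by
    rintro r ⟨u, _, rfl⟩
    exact Real.iSup_nonneg fun i => abs_nonneg _
  have hAlb : ∀ r ∈ A, (0:ℝ) ≤ r := by
    rintro r ⟨v, _, _, rfl⟩
    exact mul_nonneg (Real.iSup_nonneg fun i => abs_nonneg _)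
      (Finset.prod_nonneg fun p _ => Real.iSup_nonneg fun i => norm_nonneg _)
  have hBne : B.Nonempty := by
    refine ⟨_, ⟨fun _ => (1:ℤ), ?_, rfl⟩⟩
    rw [Finset.gcd_eq_gcd_image, Finset.image_const Finset.univ_nonempty, Finset.gcd_singleton,
      id, normalize_one]
  have hAne : A.Nonempty := ⟨_, hBA hBne.choose_spec⟩
  refine le_antisymm (csInf_le_csInf ⟨0, fun r hr => hAlb r hr⟩ hBne hBA) ?_
  apply le_csInf hAne
  rintro r ⟨v, hv0, hden, rfl⟩
  -- clear denominators
  set N : ℕ := ∏ i, (v i).den with hN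
  have hN0 : N ≠ 0 := Finset.prod_ne_zero_iff.mpr (fun i _ => (v i).den_nz)
  have hdvdN : ∀ i, (v i).den ∣ N := fun i => Finset.dvd_prod_of_mem _ (Finset.mem_univ i)
  set u : Fin d → ℤ := fun i => (v i).num * ((N / (v i).den : ℕ) : ℤ) with hu
  have hu_eq : ∀ i, ((u i : ℤ) : ℚ) = (N : ℚ) * v i := by
    intro i
    have h1 : ((v i).den : ℚ) ≠ 0 := by exact_mod_cast (v i).den_nz
    have h3 : ((N / (v i).den : ℕ) : ℚ) = (N : ℚ) / ((v i).den : ℚ) :=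
      Nat.cast_div (hdvdN i) h1
    calc ((u i : ℤ) : ℚ) = ((v i).num : ℚ) * (((N / (v i).den : ℕ)) : ℚ) := by
          rw [hu]; rw [Int.cast_mul, Int.cast_natCast]
    _ = ((v i).num : ℚ) * ((N : ℚ) / ((v i).den : ℚ)) := by rw [h3]
    _ = (N : ℚ) * (((v i).num : ℚ) / ((v i).den : ℚ)) := by ring
    _ = (N : ℚ) * v i := by rw [Rat.num_div_den]
  have hu0 : u ≠ 0 := by
    intro h0
    apply hv0
    funext i
    have h2 : ((u i : ℤ) : ℚ) = 0 := by rw [congrFun h0 i]; simp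
    rw [hu_eq i] at h2
    have := (mul_eq_zero.mp h2).resolve_left (Nat.cast_ne_zero.mpr hN0)
    simpa using this
  obtain ⟨i1, hi1⟩ : ∃ i, u i ≠ 0 := by
    by_contra hno
    push_neg at hno
    exact hu0 (funext fun i => hno i)
  set g : ℤ := Finset.univ.gcd u with hg
  have hgdvd : ∀ i, g ∣ u i := fun i => Finset.gcd_dvd (Finset.mem_univ i)
  set w : Fin d → ℤ := fun i => u i / g with hw
  have hwgcd : Finset.univ.gcd w = 1 := Finset.gcd_div_eq_one (Finset.mem_univ i1) hi1
  have hg0 : g ≠ 0 := by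
    intro h
    apply hi1
    have := hgdvd i1
    rw [h] at this
    exact zero_dvd_iff.mp this
  have huw : ∀ i, u i = g * w i := fun i => (Int.mul_ediv_cancel' (hgdvd i)).symm
  set c : ℚ := (g : ℚ) / (N : ℚ) with hc
  have hNQ : (N : ℚ) ≠ 0 := Nat.cast_ne_zero.mpr hN0
  have hc0 : c ≠ 0 := div_ne_zero (Int.cast_ne_zero.mpr hg0) hNQ
  have hvc : ∀ i, v i = c * ((w i : ℤ) : ℚ) := by
    intro i
    have h2 : (N : ℚ) * v i = (g : ℚ) * ((w i : ℤ) : ℚ) := by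
      rw [← hu_eq i, huw i]; push_cast; ring
    rw [hc, div_mul_eq_mul_div, eq_div_iff hNQ]
    linear_combination h2
  have hcden : ∀ q : Nat.Primes, (q : ℕ) ∣ c.den → q ∈ S := by
    intro q hq
    have hceq : c = Rat.divInt g (N : ℤ) := by
      rw [Rat.divInt_eq_div, hc]; norm_num
    have h1 : (c.den : ℤ) ∣ (N : ℤ) := by rw [hceq]; exact Rat.den_dvd g (N : ℤ)
    have h2 : (q : ℕ) ∣ N := by
      have := dvd_trans (Int.natCast_dvd_natCast.mpr hq) h1
      exact_mod_cast this
    rw [hN] at h2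
    obtain ⟨i, _, hdvd⟩ := (Prime.dvd_finset_prod_iff (Nat.Prime.prime q.2) _).mp h2
    exact hden i q hdvd
  have hreal : (fun i => ((v i : ℚ) : ℝ)) = ((c : ℝ)) • (fun i => ((w i : ℤ) : ℝ)) := by
    funext i
    rw [hvc i]
    push_cast
    simp [Pi.smul_apply, smul_eq_mul]
  have hsup_real : (⨆ i, |Matrix.vecMul (fun i => ((v i : ℚ) : ℝ)) hinf i|)
      = |(c : ℝ)| * ⨆ i, |Matrix.vecMul (fun i => ((w i : ℤ) : ℝ)) hinf i| := by
    rw [hreal, Matrix.smul_vecMul]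
    simp only [Pi.smul_apply, smul_eq_mul, abs_mul]
    exact ciSup_const_mul' _ (abs_nonneg _) _
  have hsup_p : ∀ p : {x // x ∈ S},
      (⨆ i, ‖Matrix.vecMul (fun i => ((v i : ℚ) : ℚ_[(p.1 : ℕ)])) (hp p.1 p.2) i‖)
        = ‖((c : ℚ_[(p.1 : ℕ)]))‖ := by
    intro p
    have hvp : (fun i => ((v i : ℚ) : ℚ_[(p.1 : ℕ)]))
        = ((c : ℚ_[(p.1 : ℕ)])) • (fun i => ((w i : ℤ) : ℚ_[(p.1 : ℕ)])) := by
      funext i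
      rw [hvc i]
      push_cast
      simp [Pi.smul_apply, smul_eq_mul]
    rw [hvp, Matrix.smul_vecMul]
    simp only [Pi.smul_apply, smul_eq_mul, norm_mul]
    rw [ciSup_const_mul' _ (norm_nonneg _) _,
      primitive_sup_norm_one hd (hp p.1 p.2) (hpint p.1 p.2) (hpdet p.1 p.2) w hwgcd, mul_one]
  rw [hsup_real, Finset.prod_congr rfl (fun p _ => hsup_p p)]
  set Wsup := ⨆ i, |Matrix.vecMul (fun i => ((w i : ℤ) : ℝ)) hinf i| with hWsup
  have hW0 : 0 ≤ Wsup := Real.iSup_nonneg fun i => abs_nonneg _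
  have h1le := one_le_key S c hc0 hcden
  calc sInf B ≤ Wsup := csInf_le ⟨0, fun r hr => hBlb r hr⟩ ⟨w, hwgcd, rfl⟩
  _ = 1 * Wsup := (one_mul _).symm
  _ ≤ (|(c : ℝ)| * ∏ p ∈ S.attach, ‖((c : ℚ_[(p.1 : ℕ)]))‖) * Wsup :=
      mul_le_mul_of_nonneg_right h1le hW0
  _ = |(c : ℝ)| * Wsup * ∏ p ∈ S.attach, ‖((c : ℚ_[(p.1 : ℕ)]))‖ := by ring
end

section
/- Let Z be a locally compact, second countable Hausdorff space with a continuous action of SL₂(ℝ). For t, x ∈ ℝ put a(t) = [[e^{−t/2}, 0],[0, e^{t/2}]] and u_x = [[1, x],[0,1]]. Let (x_i) be a sequence of reals with x_i → ∞, let μ_i be nonzero locally finite Borel measures on Z such that each μ_i is invariant under the action of u_{−x_i}·a(t)·u_{x_i} for every t ∈ ℝ, and suppose there are positive reals c_i with c_i·∫ f dμ_i → ∫ f dμ for every compactly supported continuous f : Z → ℝ, where μ is a locally finite Borel measure on Z. Then μ is invariant under the action of u_C for every C ∈ ℝ. -/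
open MeasureTheory Filter Matrix

noncomputable section

/-- `SL₂(ℝ)`. -/
abbrev SL2R := Matrix.SpecialLinearGroup (Fin 2) ℝ

instance : TopologicalSpace SL2R :=
  TopologicalSpace.induced (fun g : SL2R => (g : Matrix (Fin 2) (Fin 2) ℝ)) inferInstance

/-- `u_x = [[1, x],[0,1]]` as an element of `SL₂(ℝ)`. -/
def uSL (s : ℝ) : SL2R :=
  ⟨!![1, s; 0, 1], by simp [Matrix.det_fin_two_of]⟩

/-- `a(t) = [[e^{−t/2}, 0],[0, e^{t/2}]]` as an element of `SL₂(ℝ)`. -/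
def aSL (t : ℝ) : SL2R :=
  ⟨!![Real.exp (-(t / 2)), 0; 0, Real.exp (t / 2)], by
    simp [Matrix.det_fin_two_of, ← Real.exp_add]⟩

/-- `n C r = [[r+√(1+r²), C],[0, √(1+r²)−r]]` as an element of `SL₂(ℝ)`. -/
def nSL (C r : ℝ) : SL2R :=
  ⟨!![r + Real.sqrt (1 + r^2), C; 0, Real.sqrt (1 + r^2) - r], by
    have h : Real.sqrt (1 + r^2) ^ 2 = 1 + r^2 := by
      rw [Real.sq_sqrt]; positivity
    simp [Matrix.det_fin_two_of]
    nlinarith [h]⟩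

/-- The inverse of `nSL C r`. -/
def mInvSL (C r : ℝ) : SL2R :=
  ⟨!![Real.sqrt (1 + r^2) - r, -C; 0, r + Real.sqrt (1 + r^2)], by
    have h : Real.sqrt (1 + r^2) ^ 2 = 1 + r^2 := by
      rw [Real.sq_sqrt]; positivity
    simp [Matrix.det_fin_two_of]
    nlinarith [h]⟩

lemma mInv_mul_n (C r : ℝ) : mInvSL C r * nSL C r = 1 := by
  have h : Real.sqrt (1 + r^2) ^ 2 = 1 + r^2 := by
    rw [Real.sq_sqrt]; positivity
  ext i j
  fin_cases i <;> fin_cases j <;>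
    simp only [Matrix.SpecialLinearGroup.coe_mul] <;>
    simp [mInvSL, nSL, Matrix.mul_fin_two] <;> nlinarith [h]

lemma nSL_zero (C : ℝ) : nSL C 0 = uSL C := by
  ext i j
  fin_cases i <;> fin_cases j <;> simp [nSL, uSL]

lemma conj_eq (C x : ℝ) (hx : x ≠ 0) :
    uSL (-x) * aSL (-(2 * Real.arsinh (C / (2 * x)))) * uSL x = nSL C (C / (2 * x)) := by
  set r := C / (2 * x) with hr
  have hA : Real.exp (-(-(2 * Real.arsinh r) / 2)) = r + Real.sqrt (1 + r^2) := by
    rw [show -(-(2 * Real.arsinh r) / 2) = Real.arsinh r by ring, Real.exp_arsinh]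
  have hB : Real.exp (-(2 * Real.arsinh r) / 2) = Real.sqrt (1 + r^2) - r := by
    rw [show -(2 * Real.arsinh r) / 2 = -(Real.arsinh r) by ring, ← Real.cosh_sub_sinh,
      Real.cosh_arsinh, Real.sinh_arsinh]
  ext i j
  fin_cases i <;> fin_cases j
  · simp only [Matrix.SpecialLinearGroup.coe_mul]
    simp [uSL, aSL, nSL, Matrix.mul_fin_two, hA, hB]
  · simp only [Matrix.SpecialLinearGroup.coe_mul]
    simp [uSL, aSL, nSL, Matrix.mul_fin_two, hA, hB]
    rw [hr]; field_simp; ring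
  · simp only [Matrix.SpecialLinearGroup.coe_mul]
    simp [uSL, aSL, nSL, Matrix.mul_fin_two, hA, hB]
  · simp only [Matrix.SpecialLinearGroup.coe_mul]
    simp [uSL, aSL, nSL, Matrix.mul_fin_two, hA, hB]

lemma continuous_nSL (C : ℝ) : Continuous (fun r => nSL C r) := by
  apply continuous_induced_rng.2
  apply continuous_matrix
  intro i j
  fin_cases i <;> fin_cases j <;> simp [nSL] <;> fun_prop

lemma continuous_mInvSL (C : ℝ) : Continuous (fun r => mInvSL C r) := by
  apply continuous_induced_rng.2
  apply continuous_matrix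
  intro i j
  fin_cases i <;> fin_cases j <;> simp [mInvSL] <;> fun_prop

/-- Shearing gives unipotent invariance in the limit: if each `μ_i` is invariant
under `u_{−x_i}·a(t)·u_{x_i}` for all `t`, `x_i → ∞`, and `c_i·μ_i → μ` against
compactly supported continuous functions, then `μ` is invariant under `u_C`
for every `C ∈ ℝ`. -/
theorem stmt17 {Z : Type*} [TopologicalSpace Z] [LocallyCompactSpace Z]
    [SecondCountableTopology Z] [T2Space Z] [MeasurableSpace Z] [BorelSpace Z]
    [MulAction SL2R Z] [ContinuousSMul SL2R Z]
    (x : ℕ → ℝ) (hx : Tendsto x atTop atTop)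
    (μi : ℕ → Measure Z) (hμi0 : ∀ i, μi i ≠ 0)
    (hμiloc : ∀ i, IsLocallyFiniteMeasure (μi i))
    (hinv : ∀ i, ∀ t : ℝ,
      Measure.map (fun z : Z => (uSL (-(x i)) * aSL t * uSL (x i)) • z) (μi i) = μi i)
    (μ : Measure Z) (hμloc : IsLocallyFiniteMeasure μ)
    (c : ℕ → ℝ) (hc : ∀ i, 0 < c i)
    (hconv : ∀ f : Z → ℝ, Continuous f → HasCompactSupport f →
      Tendsto (fun i => c i * ∫ z, f z ∂(μi i)) atTop (nhds (∫ z, f z ∂μ)))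
    (C : ℝ) :
    Measure.map (fun z : Z => uSL C • z) μ = μ := by
  have hembC : MeasurableEmbedding (fun z : Z => uSL C • z) :=
    (Homeomorph.smul (uSL C) : Z ≃ₜ Z).measurableEmbedding
  -- Step 1: the key integral identity against compactly supported continuous functions.
  have key : ∀ f : Z → ℝ, Continuous f → HasCompactSupport f →
      ∫ z, f (uSL C • z) ∂μ = ∫ z, f z ∂μ := by
    intro f hf hsupp
    -- the shear parameters
    have hs0 : Tendsto (fun i => C / (2 * x i)) atTop (nhds 0) := by
      have h1 : Tendsto (fun i => 2 * x i) atTop atTop := hx.const_mul_atTop two_pos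
      have h3 := h1.inv_tendsto_atTop.const_mul C
      simpa [div_eq_mul_inv] using h3
    -- integrands are continuous with compact support
    have hFc : ∀ g : SL2R, Continuous fun z : Z => f (g • z) := fun g =>
      hf.comp (continuous_const_smul _)
    have hFsupp : ∀ g : SL2R, HasCompactSupport fun z : Z => f (g • z) := fun g =>
      hsupp.comp_homeomorph (Homeomorph.smul g)
    -- the big compact set L
    set K := tsupport f with hK
    have hKc : IsCompact K := hsupp
    set L : Set Z := (fun p : ℝ × Z => mInvSL C p.1 • p.2) '' (Set.Icc (-1 : ℝ) 1 ×ˢ K)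
      with hLdef
    have hLc : IsCompact L :=
      (isCompact_Icc.prod hKc).image
        (((continuous_mInvSL C).comp continuous_fst).smul continuous_snd)
    have hvanish : ∀ r : ℝ, |r| ≤ 1 → ∀ z : Z, z ∉ L → f (nSL C r • z) = 0 := by
      intro r hr z hz
      by_contra h
      apply hz
      have hmem : nSL C r • z ∈ K := subset_tsupport f h
      refine ⟨(r, nSL C r • z), ⟨abs_le.1 hr, hmem⟩, ?_⟩
      simp only
      rw [smul_smul, mInv_mul_n, one_smul]
    -- Urysohn function equal to 1 on L
    obtain ⟨φ₀, hφ₀L, -, hφ₀supp, hφ₀01⟩ :=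
      exists_continuous_one_zero_of_isCompact hLc isClosed_empty (by simp : Disjoint L (∅ : Set Z))
    set M : ℝ := ∫ z, φ₀ z ∂μ with hM
    have hM0 : 0 ≤ M := integral_nonneg fun z => (hφ₀01 z).1
    have hMtend := hconv φ₀ φ₀.continuous hφ₀supp
    have hMev : ∀ᶠ i in atTop, c i * ∫ z, φ₀ z ∂(μi i) < M + 1 :=
      hMtend.eventually (gt_mem_nhds (lt_add_one M))
    -- invariance rewritten through the explicit conjugate
    have hEq : ∀ᶠ i in atTop,
        ∫ z, f (nSL C (C / (2 * x i)) • z) ∂(μi i) = ∫ z, f z ∂(μi i) := by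
      filter_upwards [hx.eventually_gt_atTop 0] with i hxi
      have hg := conj_eq C (x i) (ne_of_gt hxi)
      have h := hinv i (-(2 * Real.arsinh (C / (2 * x i))))
      rw [hg] at h
      calc ∫ z, f (nSL C (C / (2 * x i)) • z) ∂(μi i)
          = ∫ y, f y ∂(Measure.map (fun z : Z => nSL C (C / (2 * x i)) • z) (μi i)) :=
            ((Homeomorph.smul (nSL C (C / (2 * x i))) : Z ≃ₜ Z).measurableEmbedding.integral_map
              _).symm
        _ = ∫ z, f z ∂(μi i) := by rw [h]
    -- the uniform bound
    have hkey2 : ∀ ε : ℝ, 0 < ε → ∀ᶠ i in atTop, ∀ z : Z,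
        |f (uSL C • z) - f (nSL C (C / (2 * x i)) • z)| ≤ ε * φ₀ z := by
      intro ε hε
      set U : Set (ℝ × Z) := {p | |f (uSL C • p.2) - f (nSL C p.1 • p.2)| < ε} with hU
      have hUopen : IsOpen U := by
        have hc1 : Continuous fun p : ℝ × Z =>
            |f (uSL C • p.2) - f (nSL C p.1 • p.2)| := by
          apply Continuous.abs
          apply Continuous.sub
          · exact hf.comp (continuous_const.smul continuous_snd)
          · exact hf.comp (((continuous_nSL C).comp continuous_fst).smul continuous_snd)
        exact isOpen_lt hc1 continuous_const
      have hsub : ({0} : Set ℝ) ×ˢ L ⊆ U := by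
        rintro ⟨r, z⟩ ⟨hr, -⟩
        simp only [Set.mem_singleton_iff] at hr
        subst hr
        simp only [hU, Set.mem_setOf_eq, nSL_zero, sub_self, abs_zero]
        exact hε
      obtain ⟨V, W, hVopen, -, h0V, hLW, hVWU⟩ :=
        generalized_tube_lemma isCompact_singleton hLc hUopen hsub
      have hVnhds : V ∈ nhds (0 : ℝ) := hVopen.mem_nhds (h0V rfl)
      have habs : ∀ᶠ i in atTop, |C / (2 * x i)| ≤ 1 := by
        have := hs0.abs
        simp only [abs_zero] at this
        exact this.eventually_le_const one_pos
      filter_upwards [hs0.eventually_mem hVnhds, habs] with i hiV hile z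
      by_cases hz : z ∈ L
      · have : (C / (2 * x i), z) ∈ U := hVWU ⟨hiV, hLW hz⟩
        have h1 : φ₀ z = 1 := hφ₀L hz
        rw [h1, mul_one]
        exact le_of_lt this
      · have h1 : f (nSL C (C / (2 * x i)) • z) = 0 := hvanish _ hile z hz
        have h2 : f (uSL C • z) = 0 := by
          rw [← nSL_zero C]
          exact hvanish 0 (by norm_num) z hz
        rw [h1, h2, sub_zero, abs_zero]
        exact mul_nonneg hε.le (hφ₀01 z).1
    -- the difference of integrals tends to zero
    have hT : Tendsto (fun i => c i * (∫ z, f (uSL C • z) ∂(μi i)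
        - ∫ z, f (nSL C (C / (2 * x i)) • z) ∂(μi i))) atTop (nhds 0) := by
      rw [NormedAddCommGroup.tendsto_nhds_zero]
      intro ε hε
      have hM1 : (0:ℝ) < M + 1 := by linarith
      have hε' : 0 < ε / (2 * (M + 1)) := by positivity
      filter_upwards [hkey2 _ hε', hMev] with i hi hMi
      haveI := hμiloc i
      have int1 : Integrable (fun z => f (uSL C • z)) (μi i) :=
        (hFc _).integrable_of_hasCompactSupport (hFsupp _)
      have int2 : Integrable (fun z => f (nSL C (C / (2 * x i)) • z)) (μi i) :=
        (hFc _).integrable_of_hasCompactSupport (hFsupp _)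
      have intφ : Integrable (fun z => φ₀ z) (μi i) :=
        φ₀.continuous.integrable_of_hasCompactSupport hφ₀supp
      have hφint0 : 0 ≤ ∫ z, φ₀ z ∂(μi i) := integral_nonneg fun z => (hφ₀01 z).1
      have e0 : ∫ z, f (uSL C • z) ∂(μi i) - ∫ z, f (nSL C (C / (2 * x i)) • z) ∂(μi i)
          = ∫ z, (f (uSL C • z) - f (nSL C (C / (2 * x i)) • z)) ∂(μi i) :=
        (integral_sub int1 int2).symm
      have e1 : |∫ z, (f (uSL C • z) - f (nSL C (C / (2 * x i)) • z)) ∂(μi i)|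
          ≤ ∫ z, |f (uSL C • z) - f (nSL C (C / (2 * x i)) • z)| ∂(μi i) := by
        simpa [Real.norm_eq_abs] using
          norm_integral_le_integral_norm
            (fun z => f (uSL C • z) - f (nSL C (C / (2 * x i)) • z)) (μ := μi i)
      have e2 : ∫ z, |f (uSL C • z) - f (nSL C (C / (2 * x i)) • z)| ∂(μi i)
          ≤ ∫ z, (ε / (2 * (M + 1))) * φ₀ z ∂(μi i) := by
        apply integral_mono (int1.sub int2).abs (intφ.const_mul _)
        intro z
        exact hi z
      have e3 : ∫ z, (ε / (2 * (M + 1))) * φ₀ z ∂(μi i)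
          = (ε / (2 * (M + 1))) * ∫ z, φ₀ z ∂(μi i) := integral_const_mul _ _
      have hci := hc i
      have hfinal : |(∫ z, f (uSL C • z) ∂(μi i))
          - ∫ z, f (nSL C (C / (2 * x i)) • z) ∂(μi i)|
          ≤ (ε / (2 * (M + 1))) * ∫ z, φ₀ z ∂(μi i) := by
        rw [e0]
        exact (e1.trans e2).trans_eq e3
      rw [Real.norm_eq_abs, abs_mul, abs_of_pos hci]
      calc c i * |(∫ z, f (uSL C • z) ∂(μi i))
          - ∫ z, f (nSL C (C / (2 * x i)) • z) ∂(μi i)|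
          ≤ c i * ((ε / (2 * (M + 1))) * ∫ z, φ₀ z ∂(μi i)) := by
            exact mul_le_mul_of_nonneg_left hfinal hci.le
        _ = (ε / (2 * (M + 1))) * (c i * ∫ z, φ₀ z ∂(μi i)) := by ring
        _ ≤ (ε / (2 * (M + 1))) * (M + 1) := by
            exact mul_le_mul_of_nonneg_left hMi.le hε'.le
        _ = ε / 2 := by field_simp
        _ < ε := by linarith
    -- put everything together
    have hA : Tendsto (fun i => c i * ∫ z, f (uSL C • z) ∂(μi i)) atTop
        (nhds (∫ z, f (uSL C • z) ∂μ)) :=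
      hconv _ (hFc _) (hFsupp _)
    have hB : Tendsto (fun i => c i * ∫ z, f (nSL C (C / (2 * x i)) • z) ∂(μi i)) atTop
        (nhds (∫ z, f z ∂μ)) := by
      have hB' := hconv f hf hsupp
      apply hB'.congr'
      filter_upwards [hEq] with i hi
      rw [hi]
    have hA' : Tendsto (fun i => c i * ∫ z, f (uSL C • z) ∂(μi i)) atTop
        (nhds (0 + ∫ z, f z ∂μ)) := by
      have := hT.add hB
      apply this.congr
      intro i
      ring
    rw [zero_add] at hA'
    exact tendsto_nhds_unique hA hA'
  -- Step 2: conclude equality of measures from equality of integrals.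
  haveI : IsFiniteMeasureOnCompacts (Measure.map (fun z : Z => uSL C • z) μ) := by
    constructor
    intro K hK
    rw [Measure.map_apply hembC.measurable hK.measurableSet]
    exact (((Homeomorph.smul (uSL C) : Z ≃ₜ Z).isCompact_preimage).2 hK).measure_lt_top
  haveI : IsLocallyFiniteMeasure (Measure.map (fun z : Z => uSL C • z) μ) :=
    isLocallyFiniteMeasure_of_isFiniteMeasureOnCompacts
  have hKeq : ∀ K : Set Z, IsCompact K →
      (Measure.map (fun z : Z => uSL C • z) μ) K = μ K := by
    intro K hK
    rw [hK.measure_eq_biInf_integral_hasCompactSupport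
        (Measure.map (fun z : Z => uSL C • z) μ),
      hK.measure_eq_biInf_integral_hasCompactSupport μ]
    refine iInf_congr fun f => iInf_congr fun hfc => iInf_congr fun hfs =>
      iInf_congr fun _ => iInf_congr fun _ => ?_
    rw [hembC.integral_map, key f hfc hfs]
  ext S hS
  rw [hS.measure_eq_iSup_isCompact, hS.measure_eq_iSup_isCompact]
  refine iSup_congr fun K => iSup_congr fun hKS => iSup_congr fun hK => hKeq K hK

end
end

section
/- Let p be a prime. Every g ∈ GL₂(ℚ_p) can be written as g = γ·k where γ is a 2×2 matrix with entries in ℤ[1/p] ⊆ ℚ (viewed in ℚ_p) whose determinant is of the form ±p^e with e ∈ ℤ, and k is a 2×2 matrix with entries in ℤ_p whose determinant is a unit of ℤ_p. In other words, GL₂(ℤ[1/p])·GL₂(ℤ_p) = GL₂(ℚ_p). -/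
lemma dense1 (p : ℕ) [Fact p.Prime] (x : ℚ_[p]) {ε : ℝ} (hε : 0 < ε) :
    ∃ (a : ℤ) (n : ℕ), ‖x - (a : ℚ_[p]) / (p : ℚ_[p]) ^ n‖ < ε := by
  have hp : (1 : ℝ) < p := by exact_mod_cast (Fact.out : p.Prime).one_lt
  obtain ⟨n, hn⟩ : ∃ n : ℕ, ‖x‖ ≤ (p : ℝ) ^ n := by
    obtain ⟨n, hn⟩ := pow_unbounded_of_one_lt ‖x‖ hp
    exact ⟨n, hn.le⟩
  have hppos : (0 : ℝ) < (p : ℝ) ^ n := by positivity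
  have hz : ‖(p : ℚ_[p]) ^ n * x‖ ≤ 1 := by
    rw [norm_mul, Padic.norm_p_pow]
    rw [zpow_neg, zpow_natCast]
    calc ((p:ℝ)^n)⁻¹ * ‖x‖ ≤ ((p:ℝ)^n)⁻¹ * (p:ℝ)^n := by
          gcongr
      _ = 1 := inv_mul_cancel₀ hppos.ne'
  set z : ℤ_[p] := ⟨(p : ℚ_[p]) ^ n * x, hz⟩ with hzdef
  obtain ⟨a, ha⟩ := PadicInt.denseRange_intCast.exists_dist_lt z
    (show 0 < ε / (p:ℝ)^n by positivity)
  refine ⟨a, n, ?_⟩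
  rw [dist_eq_norm] at ha
  have hpne : ((p : ℚ_[p]) ^ n) ≠ 0 := by
    have : (p : ℚ_[p]) ≠ 0 := by exact_mod_cast (Fact.out : p.Prime).ne_zero
    exact pow_ne_zero _ this
  have key : x - (a : ℚ_[p]) / (p : ℚ_[p]) ^ n
      = ((p : ℚ_[p]) ^ n * x - a) / (p : ℚ_[p]) ^ n := by
    field_simp
  rw [key, norm_div, Padic.norm_p_pow, zpow_neg, zpow_natCast]
  have hza : ‖((p : ℚ_[p]) ^ n * x - a)‖ = ‖z - (a : ℤ_[p])‖ := by
    rw [← PadicInt.padic_norm_e_of_padicInt]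
    push_cast [hzdef]
    rfl
  rw [hza]
  rw [div_eq_mul_inv, inv_inv]
  rwa [lt_div_iff₀ hppos] at ha


lemma nz (p : ℕ) [Fact p.Prime] (B : Matrix (Fin 2) (Fin 2) ℚ_[p])
    (hd : B.det ≠ 0) (h10 : B 1 0 = 0) : B 0 0 ≠ 0 ∧ B 1 1 ≠ 0 := by
  refine ⟨fun h => hd ?_, fun h => hd ?_⟩ <;>
    rw [Matrix.det_fin_two, h10, h] <;> ring

lemma tri (p : ℕ) [Fact p.Prime] (g : Matrix (Fin 2) (Fin 2) ℚ_[p])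
    (hg : IsUnit g.det) :
    ∃ B k : Matrix (Fin 2) (Fin 2) ℚ_[p], g = B * k ∧ B 1 0 = 0 ∧
      B 0 0 ≠ 0 ∧ B 1 1 ≠ 0 ∧ (∀ i j, ‖k i j‖ ≤ 1) ∧ ‖k.det‖ = 1 := by
  have hdg : g.det ≠ 0 := hg.ne_zero
  by_cases h0 : g 1 0 = 0
  · obtain ⟨h00, h11⟩ := nz p g hdg h0
    refine ⟨g, 1, (g.mul_one).symm, h0, h00, h11, ?_, by simp⟩
    intro i j
    rcases eq_or_ne i j with h | h <;> simp [Matrix.one_apply, h]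
  · by_cases hle : ‖g 1 0‖ ≤ ‖g 1 1‖
    · have h1 : g 1 1 ≠ 0 := by
        intro h; rw [h, norm_zero] at hle
        exact h0 (norm_le_zero_iff.mp hle)
      set t := g 1 0 / g 1 1 with ht
      have hKKinv : (!![1, 0; -t, 1] : Matrix (Fin 2) (Fin 2) ℚ_[p]) * !![1, 0; t, 1] = 1 := by
        ext i j; fin_cases i <;> fin_cases j <;>
          simp [Matrix.mul_apply, Fin.sum_univ_two]
      set B := g * !![1, 0; -t, 1] with hB
      have h10 : B 1 0 = 0 := by
        simp [hB, Matrix.mul_apply, Fin.sum_univ_two, ht]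
        field_simp
        ring
      have hdB : B.det ≠ 0 := by
        rw [hB, Matrix.det_mul, Matrix.det_fin_two_of]
        simpa using hdg
      obtain ⟨h00, h11⟩ := nz p B hdB h10
      refine ⟨B, !![1, 0; t, 1], ?_, h10, h00, h11, ?_, ?_⟩
      · rw [hB, Matrix.mul_assoc, hKKinv, Matrix.mul_one]
      · intro i j; fin_cases i <;> fin_cases j <;> simp [ht]
        exact div_le_one_of_le₀ hle (norm_nonneg _)
      · rw [Matrix.det_fin_two_of]; simp
    · push_neg at hle
      set s := g 1 1 / g 1 0 with hs
      have hKKinv : (!![-s, 1; 1, 0] : Matrix (Fin 2) (Fin 2) ℚ_[p]) * !![0, 1; 1, s] = 1 := by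
        ext i j; fin_cases i <;> fin_cases j <;>
          simp [Matrix.mul_apply, Fin.sum_univ_two]
      set B := g * !![-s, 1; 1, 0] with hB
      have h10 : B 1 0 = 0 := by
        simp [hB, Matrix.mul_apply, Fin.sum_univ_two, hs]
        field_simp
        ring
      have hdB : B.det ≠ 0 := by
        rw [hB, Matrix.det_mul, Matrix.det_fin_two_of]
        simpa using hdg
      obtain ⟨h00, h11⟩ := nz p B hdB h10
      refine ⟨B, !![0, 1; 1, s], ?_, h10, h00, h11, ?_, ?_⟩
      · rw [hB, Matrix.mul_assoc, hKKinv, Matrix.mul_one]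
      · intro i j; fin_cases i <;> fin_cases j <;> simp [hs]
        exact div_le_one_of_le₀ hle.le (norm_nonneg _)
      · rw [Matrix.det_fin_two_of]; simp


lemma zpow_form (p : ℕ) (hp : (p:ℚ) ≠ 0) (α : ℤ) :
    ∃ (a : ℤ) (n : ℕ), (p:ℚ)^α = (a:ℚ) / (p:ℚ)^n := by
  obtain ⟨m, rfl | rfl⟩ := α.eq_nat_or_neg
  · exact ⟨(p:ℤ)^m, 0, by push_cast; simp⟩
  · exact ⟨1, m, by rw [zpow_neg, zpow_natCast]; simp⟩


lemma upper (p : ℕ) [Fact p.Prime] (B : Matrix (Fin 2) (Fin 2) ℚ_[p])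
    (h10 : B 1 0 = 0) (h00 : B 0 0 ≠ 0) (h11 : B 1 1 ≠ 0) :
    ∃ (γ : Matrix (Fin 2) (Fin 2) ℚ) (k : Matrix (Fin 2) (Fin 2) ℚ_[p]),
      B = γ.map (fun x : ℚ => (x : ℚ_[p])) * k ∧
      (∀ i j, ∃ (a : ℤ) (n : ℕ), γ i j = (a : ℚ) / (p : ℚ) ^ n) ∧
      (∃ e : ℤ, γ.det = (p : ℚ) ^ e ∨ γ.det = -((p : ℚ) ^ e)) ∧
      (∀ i j, ‖k i j‖ ≤ 1) ∧ ‖k.det‖ = 1 := by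
  have hpQ : (p:ℚ) ≠ 0 := by exact_mod_cast (Fact.out : p.Prime).ne_zero
  have hpP : (p:ℚ_[p]) ≠ 0 := by exact_mod_cast (Fact.out : p.Prime).ne_zero
  set α := (B 0 0).valuation with hα
  set δ := (B 1 1).valuation with hδ
  set P : ℚ_[p] := (p:ℚ_[p])^α with hP
  set Q : ℚ_[p] := (p:ℚ_[p])^δ with hQ
  have hPne : P ≠ 0 := zpow_ne_zero _ hpP
  have hQne : Q ≠ 0 := zpow_ne_zero _ hpP
  have hnP : ‖P‖ = (p:ℝ)^(-α) := Padic.norm_p_zpow α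
  have hnQ : ‖Q‖ = (p:ℝ)^(-δ) := Padic.norm_p_zpow δ
  set u : ℚ_[p] := B 0 0 / P with hu
  set v : ℚ_[p] := B 1 1 / Q with hv
  have hp0 : (0:ℝ) < p := by exact_mod_cast (Fact.out : p.Prime).pos
  have hnu : ‖u‖ = 1 := by
    rw [hu, norm_div, hnP, Padic.norm_eq_zpow_neg_valuation h00, ← hα]
    exact div_self (zpow_pos hp0 _).ne'
  have hnv : ‖v‖ = 1 := by
    rw [hv, norm_div, hnQ, Padic.norm_eq_zpow_neg_valuation h11, ← hδ]
    exact div_self (zpow_pos hp0 _).ne'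
  have hvne : v ≠ 0 := by intro h; rw [h, norm_zero] at hnv; norm_num at hnv
  have hεpos : (0:ℝ) < (p:ℝ)^(-α) := by
    have : (0:ℝ) < p := by exact_mod_cast (Fact.out : p.Prime).pos
    positivity
  obtain ⟨a, n, hy⟩ := dense1 p (B 0 1 / v) hεpos
  set y : ℚ := (a:ℚ) / (p:ℚ)^n with hydef
  have hycast : ((y:ℚ_[p])) = (a:ℚ_[p]) / (p:ℚ_[p])^n := by push_cast [hydef]; ring
  refine ⟨!![(p:ℚ)^α, y; 0, (p:ℚ)^δ],
          !![u, (B 0 1 - (y:ℚ_[p]) * v) / P; 0, v], ?_, ?_, ?_, ?_, ?_⟩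
  · ext i j
    fin_cases i <;> fin_cases j <;>
      simp [Matrix.mul_apply, Fin.sum_univ_two, Matrix.map_apply] <;>
      push_cast
    · rw [hu, ← hP]; field_simp
    · rw [← hP, mul_div_cancel₀ _ hPne]; ring
    · exact h10
    · rw [hv, ← hQ]; field_simp
  · intro i j
    fin_cases i <;> fin_cases j <;> simp
    · exact zpow_form p hpQ α
    · exact ⟨a, n, rfl⟩
    · exact ⟨0, 0, by simp⟩
    · exact zpow_form p hpQ δ
  · refine ⟨α + δ, Or.inl ?_⟩
    rw [Matrix.det_fin_two_of, zpow_add₀ hpQ]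
    simp
  · intro i j
    fin_cases i <;> fin_cases j <;> simp [hnu, hnv]
    rw [hnP, div_le_one hεpos]
    have : B 0 1 - (y:ℚ_[p]) * v = v * (B 0 1 / v - ((a:ℚ_[p]) / (p:ℚ_[p])^n)) := by
      rw [← hycast]; field_simp
    rw [this, norm_mul, hnv, one_mul]
    exact hy.le
  · rw [Matrix.det_fin_two_of]
    simp [hnu, hnv]


/-- `GL₂(ℚ_p) = GL₂(ℤ[1/p])·GL₂(ℤ_p)`: every `g ∈ GL₂(ℚ_p)` factors as
`g = γ·k` with `γ` a rational matrix with entries in `ℤ[1/p]` and determinant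
`±p^e`, and `k` a matrix over `ℤ_p` with unit determinant. -/
theorem stmt18 (p : ℕ) [Fact p.Prime] (g : Matrix (Fin 2) (Fin 2) ℚ_[p])
    (hg : IsUnit g.det) :
    ∃ (γ : Matrix (Fin 2) (Fin 2) ℚ) (k : Matrix (Fin 2) (Fin 2) ℚ_[p]),
      g = γ.map (fun x : ℚ => (x : ℚ_[p])) * k ∧
      (∀ i j, ∃ (a : ℤ) (n : ℕ), γ i j = (a : ℚ) / (p : ℚ) ^ n) ∧
      (∃ e : ℤ, γ.det = (p : ℚ) ^ e ∨ γ.det = -((p : ℚ) ^ e)) ∧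
      (∀ i j, ‖k i j‖ ≤ 1) ∧ ‖k.det‖ = 1 := by
  obtain ⟨B, k1, hgB, h10, h00, h11, hk1, hk1det⟩ := tri p g hg
  obtain ⟨γ, k2, hBγ, hent, hdet, hk2, hk2det⟩ := upper p B h10 h00 h11
  refine ⟨γ, k2 * k1, ?_, hent, hdet, ?_, ?_⟩
  · rw [hgB, hBγ, Matrix.mul_assoc]
  · intro i j
    rw [Matrix.mul_apply, Fin.sum_univ_two]
    refine le_trans (Padic.nonarchimedean _ _) (max_le ?_ ?_) <;>
      rw [norm_mul] <;>
      exact mul_le_one₀ (hk2 _ _) (norm_nonneg _) (hk1 _ _)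
  · rw [Matrix.det_mul, norm_mul, hk2det, hk1det, one_mul]
end

section
/- Let p be a prime. Every g ∈ GL₂(ℚ_p) admits an Iwasawa decomposition g = a·u·k, where a = [[α, 0],[0, β]] with α, β ∈ ℚ_p nonzero, u = [[1, x],[0,1]] with x ∈ ℚ_p, and k is a 2×2 matrix with entries in ℤ_p whose determinant is a unit of ℤ_p (i.e., k ∈ GL₂(ℤ_p)). -/
/-- Iwasawa decomposition in `GL₂(ℚ_p)`: every `g ∈ GL₂(ℚ_p)` can be written as
`g = [[α,0],[0,β]]·[[1,x],[0,1]]·k` with `α, β ∈ ℚ_p \ {0}`, `x ∈ ℚ_p` and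
`k ∈ GL₂(ℤ_p)` (entries in `ℤ_p`, determinant a unit). -/
theorem stmt19 (p : ℕ) [Fact p.Prime] (g : Matrix (Fin 2) (Fin 2) ℚ_[p])
    (hg : IsUnit g.det) :
    ∃ (α β x : ℚ_[p]) (k : Matrix (Fin 2) (Fin 2) ℚ_[p]),
      α ≠ 0 ∧ β ≠ 0 ∧
      g = !![α, 0; 0, β] * !![1, x; 0, 1] * k ∧
      (∀ i j, ‖k i j‖ ≤ 1) ∧ ‖k.det‖ = 1 := by
  have hdet : g.det ≠ 0 := hg.ne_zero
  have hdet2 : g.det = g 0 0 * g 1 1 - g 0 1 * g 1 0 := Matrix.det_fin_two g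
  set a := g 0 0 with ha
  set b := g 0 1 with hb
  set c := g 1 0 with hc
  set d := g 1 1 with hd
  have hD : a * d - b * c ≠ 0 := by rw [← hdet2]; exact hdet
  by_cases hcd : ‖c‖ ≤ ‖d‖
  · -- lower-triangular k
    have hd0 : d ≠ 0 := by
      intro h
      have hc0 : c = 0 := by
        have := hcd
        rw [h, norm_zero] at this
        simpa using le_antisymm this (norm_nonneg c)
      rw [hdet2, h, hc0] at hdet
      simp at hdet
    refine ⟨g.det / d, d, b * d / g.det, !![1, 0; c / d, 1], ?_, hd0, ?_, ?_, ?_⟩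
    · exact div_ne_zero hdet hd0
    · ext i j
      fin_cases i <;> fin_cases j <;>
        simp [Matrix.mul_apply, Fin.sum_univ_two, hdet2] <;>
        simp only [← ha, ← hb, ← hc, ← hd] <;>
        field_simp [hD] <;> ring
    · intro i j
      fin_cases i <;> fin_cases j <;> simp
      exact div_le_one_of_le₀ hcd (norm_nonneg d)
    · simp [Matrix.det_fin_two]
  · -- anti-diagonal type k
    have hc0 : c ≠ 0 := by
      intro h
      rw [h, norm_zero] at hcd
      exact hcd (norm_nonneg d)
    have hdc : ‖d‖ ≤ ‖c‖ := le_of_lt (not_le.mp hcd)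
    refine ⟨-g.det / c, c, -(a * c) / g.det, !![0, 1; 1, d / c], ?_, hc0, ?_, ?_, ?_⟩
    · exact div_ne_zero (neg_ne_zero.mpr hdet) hc0
    · ext i j
      fin_cases i <;> fin_cases j <;>
        simp [Matrix.mul_apply, Fin.sum_univ_two, hdet2] <;>
        simp only [← ha, ← hb, ← hc, ← hd] <;>
        field_simp [hD] <;> ring
    · intro i j
      fin_cases i <;> fin_cases j <;> simp
      exact div_le_one_of_le₀ hdc (norm_nonneg c)
    · simp [Matrix.det_fin_two]
end
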